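/- arXiv:2303.16263 — 6 statements merged into one kernel-verified Lean document; each statement's English description precedes it below -/
import Mathlib

section
/- Let R and R' be two skew lines in ℙ³ over ℂ, corresponding to 2-dimensional subspaces U and U' of ℂ⁴ with U ∩ U' = 0. Let P₁, P₂, P₃, P₄ be pairwise distinct points on R and P₁', P₂', P₃', P₄' pairwise distinct points on R', and for i = 1, …, 4 let rᵢ be the line through Pᵢ and Pᵢ'. Then there exists a nonzero homogeneous quadratic form on ℂ⁴ vanishing on all four lines r₁, r₂, r₃, r₄ if and only if there exists a linear isomorphism f : U → U' whose induced projective map sends Pᵢ to Pᵢ' for every i = 1, …, 4 (i.e., if and only if the cross-ratios j(P₁,P₂;P₃,P₄) and j(P₁',P₂';P₃',P₄') are equal). -/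
/-!
Write `ℂ⁴ = U ⊕ U'`. A quadric through the lines `rᵢ` contains three points of each of `R`, `R'`,
hence contains `R` and `R'`; such a quadric is `v ↦ β (π v, π' v)` for the bilinear form
`β = polar q` on `U × U'`, and it contains `rᵢ` exactly when `β (Pᵢ, Pᵢ') = 0`. A nonzero `β` with
three such incidences is nondegenerate, so `u ↦ ker β (u, ·)` is a projectivity `R → R'` with
`Pᵢ ↦ Pᵢ'`. In terms of the area form `ω` of `U'`, whose `ω (w, ·)` vanishes exactly on the
multiples of `w`, it is `f = ω⁻¹ ∘ β`; conversely, `β (u, w) = ω (f u, w)` defines the quadric.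
-/

open Module Projectivization
open scoped LinearAlgebra.Projectivization

section TwoDimensional

variable {K E M : Type*} [Field K] [AddCommGroup E] [Module K E] [AddCommGroup M] [Module K M]

theorem LinearIndependent.notMem_span_singleton_of_pair {x y : E}
    (h : LinearIndependent K ![x, y]) : x ∉ K ∙ y := by
  rw [linearIndependent_fin2] at h
  rintro hx
  obtain ⟨a, ha⟩ := Submodule.mem_span_singleton.mp hx
  exact h.2 a (by simpa using ha)

theorem LinearIndependent.span_pair_eq_top (hE : finrank K E = 2) {x y : E}
    (h : LinearIndependent K ![x, y]) : Submodule.span K {x, y} = ⊤ := by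
  rw [← Matrix.range_cons_cons_empty x y ![]]
  exact h.span_eq_top_of_card_eq_finrank (by simp [hE])

theorem LinearIndependent.exists_smul_add_smul_eq (hE : finrank K E = 2) {x y : E}
    (h : LinearIndependent K ![x, y]) (z : E) : ∃ s t : K, s • x + t • y = z :=
  Submodule.mem_span_pair.mp (h.span_pair_eq_top hE ▸ Submodule.mem_top)

theorem LinearIndependent.linearMap_ext_pair (hE : finrank K E = 2) {x y : E}
    (h : LinearIndependent K ![x, y]) {f g : E →ₗ[K] M} (hx : f x = g x) (hy : f y = g y) :
    f = g :=
  LinearMap.ext_on (h.span_pair_eq_top hE) (by rintro _ (rfl | rfl) <;> assumption)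

theorem ne_zero_of_smul_add_smul_notMem_span_singleton {x y : E} {s t : K}
    (h : s • x + t • y ∉ K ∙ y) : s ≠ 0 := by
  rintro rfl
  simp [Submodule.smul_mem, Submodule.mem_span_singleton_self] at h

theorem QuadraticMap.eq_zero_of_finrank_eq_two (hE : finrank K E = 2) (q : QuadraticMap K E M)
    {x y z : E} (hxy : LinearIndependent K ![x, y]) (hzx : LinearIndependent K ![z, x])
    (hzy : LinearIndependent K ![z, y]) (hx : q x = 0) (hy : q y = 0) (hz : q z = 0) :
    q = 0 := by
  have expand : ∀ s t : K, q (s • x + t • y) = (s * t) • polar q x y := by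
    intro s t
    rw [QuadraticMap.map_add q, QuadraticMap.map_smul, QuadraticMap.map_smul, hx, hy,
      polar_smul_left, polar_smul_right, smul_smul]
    simp
  obtain ⟨s, t, rfl⟩ := hxy.exists_smul_add_smul_eq hE z
  have hs : s ≠ 0 := ne_zero_of_smul_add_smul_notMem_span_singleton
    hzy.notMem_span_singleton_of_pair
  have ht : t ≠ 0 := ne_zero_of_smul_add_smul_notMem_span_singleton (x := y) (y := x)
    (by rw [add_comm]; exact hzx.notMem_span_singleton_of_pair)
  have hpolar : polar q x y = 0 := by
    rwa [expand, smul_eq_zero, or_iff_right (mul_ne_zero hs ht)] at hz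
  ext v
  obtain ⟨a, b, rfl⟩ := hxy.exists_smul_add_smul_eq hE v
  simp [expand, hpolar]

theorem QuadraticMap.eq_zero_of_pairwise_linearIndependent {ι : Type*} [Fintype ι]
    (hι : 2 < Fintype.card ι) (hE : finrank K E = 2) (q : QuadraticMap K E M) {x : ι → E}
    (hx : Pairwise fun i j => LinearIndependent K ![x i, x j]) (hqx : ∀ i, q (x i) = 0) :
    q = 0 := by
  obtain ⟨a, b, c, hab, hac, hbc⟩ := Fintype.two_lt_card_iff.mp hι
  exact q.eq_zero_of_finrank_eq_two hE (hx hab) (hx hac.symm) (hx hbc.symm) (hqx a) (hqx b) (hqx c)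

end TwoDimensional

namespace Module.Basis

variable {K E : Type*} [Field K] [AddCommGroup E] [Module K E] (b : Basis (Fin 2) K E)

noncomputable def areaForm : LinearMap.BilinForm K E :=
  .linMulLin (b.coord 0) (b.coord 1) - .linMulLin (b.coord 1) (b.coord 0)

theorem areaForm_apply (v w : E) :
    b.areaForm v w = b.coord 0 v * b.coord 1 w - b.coord 1 v * b.coord 0 w := rfl

theorem areaForm_self (v : E) : b.areaForm v v = 0 := by
  rw [areaForm_apply]; ring

theorem areaForm_basis : b.areaForm (b 0) (b 1) = 1 := by
  simp [areaForm_apply]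

theorem areaForm_eq_det (v w : E) : b.areaForm v w = b.det ![v, w] := by
  simp [areaForm_apply, Basis.det_apply, Matrix.det_fin_two, Basis.toMatrix_apply]
  ring

theorem areaForm_nondegenerate : b.areaForm.Nondegenerate := by
  refine ⟨fun v hv => ?_, fun w hw => ?_⟩ <;> rw [← b.forall_coord_eq_zero_iff, Fin.forall_fin_two]
  · exact ⟨by simpa [areaForm_apply] using hv (b 1), by simpa [areaForm_apply] using hv (b 0)⟩
  · exact ⟨by simpa [areaForm_apply] using hw (b 1), by simpa [areaForm_apply] using hw (b 0)⟩

theorem mem_span_singleton_of_areaForm_eq_zero {v w : E} (h : b.areaForm v w = 0)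
    (hw : w ≠ 0) : v ∈ K ∙ w := by
  by_contra hv
  have hvw : LinearIndependent K ![v, w] :=
    linearIndependent_fin2.mpr ⟨hw, fun a ha => hv (Submodule.mem_span_singleton.mpr ⟨a, ha⟩)⟩
  have hunit := (is_basis_iff_det b).mp
    ⟨hvw, hvw.span_eq_top_of_card_eq_finrank (by simp [finrank_eq_card_basis b])⟩
  rw [← areaForm_eq_det, h] at hunit
  exact not_isUnit_zero hunit

end Module.Basis

section PairwiseIndependent

variable {K E E' ι : Type*} [Field K] [AddCommGroup E] [Module K E] [AddCommGroup E']
  [Module K E'] {x : ι → E} {x' : ι → E'}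

theorem ne_zero_of_pairwise_linearIndependent [Nontrivial ι]
    (hx : Pairwise fun i j => LinearIndependent K ![x i, x j]) (i : ι) : x i ≠ 0 := by
  obtain ⟨j, hj⟩ := exists_ne i
  simpa using (hx hj.symm).ne_zero 0

theorem exists_pair_notMem_span_singleton [Fintype ι] (hι : 2 < Fintype.card ι)
    (hx : Pairwise fun i j => LinearIndependent K ![x i, x j]) (u : E) :
    ∃ i j, i ≠ j ∧ x i ∉ K ∙ u ∧ x j ∉ K ∙ u := by
  have atMostOne : ∀ i j, i ≠ j → x i ∈ K ∙ u → x j ∉ K ∙ u := by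
    intro i j hij hi hj
    obtain ⟨a, ha⟩ := Submodule.mem_span_singleton.mp hi
    obtain ⟨c, hc⟩ := Submodule.mem_span_singleton.mp hj
    have h := LinearIndependent.pair_iff.mp (hx hij) c (-a) (by
      rw [← ha, ← hc, smul_smul, smul_smul, neg_mul, mul_comm, neg_smul, add_neg_cancel])
    exact (hx hij).ne_zero 0 (by simp [← ha, neg_eq_zero.mp h.2])
  obtain ⟨a, b, c, hab, hac, hbc⟩ := Fintype.two_lt_card_iff.mp hι
  by_cases ha : x a ∈ K ∙ u
  · exact ⟨b, c, hbc, atMostOne a b hab ha, atMostOne a c hac ha⟩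
  by_cases hb : x b ∈ K ∙ u
  · exact ⟨a, c, hac, ha, atMostOne b c hbc hb⟩
  exact ⟨a, b, hab, ha, hb⟩

theorem LinearMap.injective_of_apply_pairs_eq_zero [Fintype ι] (hι : 2 < Fintype.card ι)
    (hE : finrank K E = 2) (hE' : finrank K E' = 2)
    (hx : Pairwise fun i j => LinearIndependent K ![x i, x j])
    (hx' : Pairwise fun i j => LinearIndependent K ![x' i, x' j])
    {β : E →ₗ[K] E' →ₗ[K] K} (hβ : β ≠ 0) (hβx : ∀ i, β (x i) (x' i) = 0) :
    Function.Injective β := by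
  rw [← LinearMap.ker_eq_bot, Submodule.eq_bot_iff]
  intro u hu
  by_contra hu0
  have hβu : β u = 0 := hu
  -- `u` and `x i` span `E`, so `β (x j)` is a multiple of `β (x i)`, which then kills `x' i, x' j`.
  obtain ⟨i, j, hij, hi, hj⟩ := exists_pair_notMem_span_singleton hι hx u
  have hiu : LinearIndependent K ![x i, u] :=
    linearIndependent_fin2.mpr ⟨hu0, fun a ha => hi (Submodule.mem_span_singleton.mpr ⟨a, ha⟩)⟩
  obtain ⟨a, c, hac⟩ := hiu.exists_smul_add_smul_eq hE (x j)
  have ha : a ≠ 0 := ne_zero_of_smul_add_smul_notMem_span_singleton (hac ▸ hj)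
  have hβj : β (x j) = a • β (x i) := by simp [← hac, hβu]
  have hβi : β (x i) = 0 := by
    refine (hx' hij).linearMap_ext_pair hE' (by simp [hβx]) ?_
    have := hβx j
    rw [hβj, LinearMap.smul_apply, smul_eq_zero, or_iff_right ha] at this
    simpa using this
  exact hβ (hiu.linearMap_ext_pair hE (by simp [hβi]) (by simp [hβu]))

theorem exists_bilin_iff_exists_linearEquiv [Fintype ι] (hι : 2 < Fintype.card ι)
    (hE : finrank K E = 2) (hE' : finrank K E' = 2)
    (hx : Pairwise fun i j => LinearIndependent K ![x i, x j])
    (hx' : Pairwise fun i j => LinearIndependent K ![x' i, x' j]) :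
    (∃ β : E →ₗ[K] E' →ₗ[K] K, β ≠ 0 ∧ ∀ i, β (x i) (x' i) = 0) ↔
      ∃ f : E ≃ₗ[K] E', ∀ i, K ∙ f (x i) = K ∙ x' i := by
  have : Nontrivial ι := Fintype.one_lt_card_iff_nontrivial.mp (by omega)
  have : FiniteDimensional K E := Module.finite_of_finrank_eq_succ hE
  have : FiniteDimensional K E' := Module.finite_of_finrank_eq_succ hE'
  let b := Module.finBasisOfFinrankEq K E' hE'
  constructor
  · rintro ⟨β, hβ, hβx⟩
    let ωinv := (b.areaForm.toDual b.areaForm_nondegenerate).symm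
    let f₀ : E →ₗ[K] E' := ωinv.toLinearMap ∘ₗ β
    have hf₀ : ∀ u w, b.areaForm (f₀ u) w = β u w := fun u w =>
      LinearMap.BilinForm.apply_toDual_symm_apply (hB := b.areaForm_nondegenerate) ..
    have hf₀inj : Function.Injective f₀ := ωinv.injective.comp
      (LinearMap.injective_of_apply_pairs_eq_zero hι hE hE' hx hx' hβ hβx)
    refine ⟨f₀.linearEquivOfInjective hf₀inj (hE.trans hE'.symm), fun i => ?_⟩
    obtain ⟨c, hc⟩ := Submodule.mem_span_singleton.mp
      (b.mem_span_singleton_of_areaForm_eq_zero (by rw [hf₀, hβx])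
        (ne_zero_of_pairwise_linearIndependent hx' i))
    have hc0 : c ≠ 0 := by
      rintro rfl
      exact ne_zero_of_pairwise_linearIndependent hx i (hf₀inj (by simp [← hc]))
    rw [LinearMap.linearEquivOfInjective_apply, ← hc, Submodule.span_singleton_smul_eq hc0.isUnit]
  · rintro ⟨f, hf⟩
    refine ⟨b.areaForm ∘ₗ f.toLinearMap, fun h => ?_, fun i => ?_⟩
    · simpa [b.areaForm_basis] using LinearMap.congr_fun₂ h (f.symm (b 0)) (b 1)
    · obtain ⟨c, hc⟩ := Submodule.mem_span_singleton.mp (hf i ▸ Submodule.mem_span_singleton_self _)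
      simp [← hc, b.areaForm_self]

namespace QuadraticMap

variable {R V M : Type*} [CommRing R] [AddCommGroup V] [Module R V] [AddCommGroup M] [Module R M]
  {U U' : Submodule R V} (hc : IsCompl U U')

noncomputable def ofIsCompl (β : U →ₗ[R] U' →ₗ[R] M) : QuadraticMap R V M :=
  LinearMap.BilinMap.toQuadraticMap <|
    β.compl₁₂ (U.projectionOnto U' hc) (U'.projectionOnto U hc.symm)

theorem ofIsCompl_apply_add (β : U →ₗ[R] U' →ₗ[R] M) (u : U) (w : U') :
    ofIsCompl hc β (u + w) = β u w := by
  simp [ofIsCompl]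

@[simp]
theorem ofIsCompl_zero : ofIsCompl hc (0 : U →ₗ[R] U' →ₗ[R] M) = 0 := by
  ext v
  simp [ofIsCompl]

theorem ofIsCompl_ne_zero {β : U →ₗ[R] U' →ₗ[R] M} (hβ : β ≠ 0) : ofIsCompl hc β ≠ 0 := by
  contrapose! hβ
  ext u w
  simpa [ofIsCompl_apply_add] using congr($hβ (u + w))

theorem ofIsCompl_eq_zero_of_mem_sup {β : U →ₗ[R] U' →ₗ[R] M} {u : U} {w : U'}
    (huw : β u w = 0) {v : V} (hv : v ∈ R ∙ (u : V) ⊔ R ∙ (w : V)) : ofIsCompl hc β v = 0 := by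
  obtain ⟨_, hs, _, ht, rfl⟩ := Submodule.mem_sup.mp hv
  obtain ⟨s, rfl⟩ := Submodule.mem_span_singleton.mp hs
  obtain ⟨t, rfl⟩ := Submodule.mem_span_singleton.mp ht
  simpa [huw] using ofIsCompl_apply_add hc β (s • u) (t • w)

theorem eq_ofIsCompl_polar {q : QuadraticMap R V M} (hqU : ∀ u ∈ U, q u = 0)
    (hqU' : ∀ w ∈ U', q w = 0) :
    q = ofIsCompl hc ((polarBilin q).compl₁₂ U.subtype U'.subtype) := by
  ext v
  obtain ⟨u, w, rfl, -⟩ := Submodule.existsUnique_add_of_isCompl hc v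
  rw [ofIsCompl_apply_add, QuadraticMap.map_add q, hqU u u.2, hqU' w w.2]
  simp

end QuadraticMap

theorem exists_quadraticForm_iff_exists_bilin {K V ι : Type*} [Field K] [AddCommGroup V]
    [Module K V] {U U' : Submodule K V} (hc : IsCompl U U') (hU : finrank K U = 2)
    (hU' : finrank K U' = 2) [Fintype ι] (hι : 2 < Fintype.card ι) {x : ι → U} {x' : ι → U'}
    (hx : Pairwise fun i j => LinearIndependent K ![x i, x j])
    (hx' : Pairwise fun i j => LinearIndependent K ![x' i, x' j]) :
    (∃ q : QuadraticForm K V, q ≠ 0 ∧ ∀ i, ∀ v ∈ K ∙ (x i : V) ⊔ K ∙ (x' i : V), q v = 0) ↔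
      ∃ β : U →ₗ[K] U' →ₗ[K] K, β ≠ 0 ∧ ∀ i, β (x i) (x' i) = 0 := by
  constructor
  · rintro ⟨q, hq, hqr⟩
    have hqx : ∀ i, q (x i) = 0 := fun i =>
      hqr i _ (Submodule.mem_sup_left (Submodule.mem_span_singleton_self _))
    have hqx' : ∀ i, q (x' i) = 0 := fun i =>
      hqr i _ (Submodule.mem_sup_right (Submodule.mem_span_singleton_self _))
    have hqU : ∀ u ∈ U, q u = 0 := fun u hu => by
      simpa using congr($((q.comp U.subtype).eq_zero_of_pairwise_linearIndependent hι hU hx hqx)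
        ⟨u, hu⟩)
    have hqU' : ∀ w ∈ U', q w = 0 := fun w hw => by
      simpa using congr($((q.comp U'.subtype).eq_zero_of_pairwise_linearIndependent hι hU' hx' hqx')
        ⟨w, hw⟩)
    refine ⟨(QuadraticMap.polarBilin q).compl₁₂ U.subtype U'.subtype, fun h => hq ?_, fun i => ?_⟩
    · rw [QuadraticMap.eq_ofIsCompl_polar hc hqU hqU', h, QuadraticMap.ofIsCompl_zero]
    · have hqr' := hqr i _ (Submodule.add_mem_sup (Submodule.mem_span_singleton_self (x i : V))
        (Submodule.mem_span_singleton_self (x' i : V)))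
      simp [QuadraticMap.polar, hqr', hqx, hqx']
  · rintro ⟨β, hβ, hβx⟩
    exact ⟨_, QuadraticMap.ofIsCompl_ne_zero hc hβ,
      fun i _ hv => QuadraticMap.ofIsCompl_eq_zero_of_mem_sup hc (hβx i) hv⟩

theorem Projectivization.exists_pairwise_linearIndependent_lift {K V ι : Type*} [Field K]
    [AddCommGroup V] [Module K V] {U : Submodule K V} {P : ι → ℙ K V}
    (hP : ∀ i, (P i).submodule ≤ U) (hinj : Function.Injective P) :
    ∃ x : ι → U, (∀ i, (P i).submodule = K ∙ (x i : V)) ∧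
      Pairwise fun i j => LinearIndependent K ![x i, x j] := by
  refine ⟨fun i => ⟨(P i).rep, hP i ?_⟩, fun i => (P i).submodule_eq, fun i j hij => ?_⟩
  · rw [(P i).submodule_eq]
    exact Submodule.mem_span_singleton_self _
  · apply LinearIndependent.of_comp U.subtype
    convert linearIndependent_pair_iff_ne.mpr (hinj.ne hij) using 1
    ext k
    fin_cases k <;> rfl

theorem forall_span_singleton_coe_eq_iff {K V : Type*} [Field K] [AddCommGroup V] [Module K V]
    {U U' : Submodule K V} (f : U →ₗ[K] U') (x : U) (x' : U') :
    (∀ v : U, K ∙ (v : V) = K ∙ (x : V) → K ∙ (f v : V) = K ∙ (x' : V)) ↔ K ∙ f x = K ∙ x' := by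
  have coe_iff : ∀ {W : Submodule K V} (v w : W), K ∙ (v : V) = K ∙ (w : V) ↔ K ∙ v = K ∙ w :=
    fun {W} v w => by
      rw [← Submodule.map_subtype_span_singleton, ← Submodule.map_subtype_span_singleton,
        (Submodule.map_injective_of_injective W.injective_subtype).eq_iff]
  simp_rw [coe_iff]
  refine ⟨fun h => h x rfl, fun h v hv => ?_⟩
  rw [← h]
  simpa only [Submodule.map_span, Set.image_singleton] using congr(Submodule.map f $hv)

/-- Lemma: Quadrics and (2,4) grids.
Let `R = ℙ(U)` and `R' = ℙ(U')` be skew lines in `ℙ³` over `ℂ`, let `P 0, …, P 3` be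
pairwise distinct points on `R` and `P' 0, …, P' 3` pairwise distinct points on `R'`, and
let `rᵢ` be the line through `P i` and `P' i` (with corresponding subspace
`(P i).submodule ⊔ (P' i).submodule`).  Then some nonzero quadratic form on `ℂ⁴` vanishes
on all four lines `r₀, …, r₃` if and only if there is a linear isomorphism `f : U ≃ U'`
whose induced projective map sends `P i` to `P' i` for every `i` (equivalently, the two
cross-ratios agree). -/
theorem quadric_through_four_lines_iff_projectively_equivalent
    (U U' : Submodule ℂ (Fin 4 → ℂ))
    (hU : Module.finrank ℂ U = 2) (hU' : Module.finrank ℂ U' = 2)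
    (hskew : U ⊓ U' = ⊥)
    (P P' : Fin 4 → ℙ ℂ (Fin 4 → ℂ))
    (hP : ∀ i, (P i).submodule ≤ U) (hP' : ∀ i, (P' i).submodule ≤ U')
    (hPinj : Function.Injective P) (hP'inj : Function.Injective P') :
    (∃ q : QuadraticForm ℂ (Fin 4 → ℂ), q ≠ 0 ∧
        ∀ i : Fin 4, ∀ v ∈ (P i).submodule ⊔ (P' i).submodule, q v = 0) ↔
    (∃ f : U ≃ₗ[ℂ] U', ∀ i : Fin 4, ∀ v : U,
        Submodule.span ℂ {(v : Fin 4 → ℂ)} = (P i).submodule →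
        Submodule.span ℂ {((f v : U') : Fin 4 → ℂ)} = (P' i).submodule) := by
  obtain ⟨x, hPx, hx⟩ := exists_pairwise_linearIndependent_lift hP hPinj
  obtain ⟨x', hP'x', hx'⟩ := exists_pairwise_linearIndependent_lift hP' hP'inj
  have hc : IsCompl U U' :=
    (Submodule.isCompl_iff_disjoint U U' (by simp [hU, hU'])).mpr (disjoint_iff.mpr hskew)
  have h4 : 2 < Fintype.card (Fin 4) := by simp
  simp_rw [hPx, hP'x']
  rw [exists_quadraticForm_iff_exists_bilin hc hU hU' h4 hx hx',
    exists_bilin_iff_exists_linearEquiv h4 hU hU' hx hx']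
  refine exists_congr fun f => forall_congr' fun i => ?_
  exact (forall_span_singleton_coe_eq_iff f.toLinearMap (x i) (x' i)).symm
end PairwiseIndependent
end

section
/- Let q and q' be nondegenerate quadratic forms on ℂ⁴ that are not proportional, and suppose the quadric surfaces Q = V(q) and Q' = V(q') in ℙ³ both contain two given skew lines R and R'. Then there exist lines S and S' in ℙ³ (possibly equal), each of which meets both R and R', such that Q ∩ Q' = R ∪ R' ∪ S ∪ S'. -/
open Projectivization
open scoped LinearAlgebra.Projectivization

/-!
Since `U ⊕ U'` is the whole space and both summands are isotropic for `q` and `q'`, the two forms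
read `q (u + u') = B u u'` and `q' (u + u') = B' u u'` for the polar pairings `B, B'` of `U` with
`U'`. Nondegeneracy of `q` makes `B` a perfect pairing, so `B' u u' = B u (φ u')` for an
endomorphism `φ` of `U'`, which is not scalar because `q'` is not a multiple of `q`. A common zero
with `u, u' ≠ 0` forces `u'` to be an eigenvector of `φ` (both `u'` and `φ u'` lie on the line
`ker (B u)`) and then `u` to lie on the line `ker (B · u')`. Since `φ` has at most two eigenlines,
this leaves the two lines `span {k, e}`, one for each eigenline `K ∙ e` of `φ`, with `K ∙ k` the
kernel of `B · e`.
-/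

open Module Submodule

section Pencil

variable {K M N : Type*} [Field K] [AddCommGroup M] [Module K M] [AddCommGroup N] [Module K N]

theorem exists_smul_eq_of_mem_of_ne_top [FiniteDimensional K M] (hM : finrank K M = 2)
    {W : Submodule K M} (hW : W ≠ ⊤) {x y : M} (hx : x ∈ W) (hx0 : x ≠ 0) (hy : y ∈ W) :
    ∃ c : K, c • x = y := by
  have hpos : 0 < finrank K W :=
    one_le_finrank_iff.mpr ((Submodule.ne_bot_iff W).mpr ⟨x, hx, hx0⟩)
  have hlt : finrank K W < 2 := hM ▸ finrank_lt hW
  have hW1 : finrank K W = 1 := by omega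
  obtain ⟨c, hc⟩ := (finrank_eq_one_iff_of_nonzero' (⟨x, hx⟩ : W) (by simpa using hx0)).mp
    hW1 ⟨y, hy⟩
  exact ⟨c, congrArg Subtype.val hc⟩

namespace Module.End

theorem HasEigenvalue.exists_eigenspace_eq_span_singleton [FiniteDimensional K M]
    (hM : finrank K M = 2) {f : End K M} {μ : K} (hμ : f.HasEigenvalue μ) (hf : f ≠ μ • 1) :
    ∃ e, f.HasEigenvector μ e ∧ f.eigenspace μ = K ∙ e := by
  obtain ⟨e, he⟩ := hμ.exists_hasEigenvector
  have hne : f.eigenspace μ ≠ ⊤ := fun htop ↦ hf <| LinearMap.ext fun x ↦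
    mem_eigenspace_iff.mp (htop ▸ mem_top)
  refine ⟨e, he, le_antisymm (fun x hx ↦ ?_) (span_singleton_le_iff_mem _ _ |>.mpr he.1)⟩
  exact mem_span_singleton.mpr (exists_smul_eq_of_mem_of_ne_top hM hne he.1 he.2 hx)

theorem exists_hasEigenvector_of_finrank_eq_two [IsAlgClosed K] [FiniteDimensional K M]
    (hM : finrank K M = 2) {f : End K M} (hf : ∀ c : K, f ≠ c • 1) :
    ∃ (μ₁ μ₂ : K) (e₁ e₂ : M), f.HasEigenvector μ₁ e₁ ∧ f.HasEigenvector μ₂ e₂ ∧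
      ∀ μ x, f.HasEigenvector μ x → x ∈ K ∙ e₁ ∨ x ∈ K ∙ e₂ := by
  have hcard : f.charpoly.roots.card = 2 := by
    rw [IsAlgClosed.card_roots_eq_natDegree, LinearMap.charpoly_natDegree, hM]
  obtain ⟨μ₁, μ₂, hroots⟩ := Multiset.card_eq_two.mp hcard
  have hspec : ∀ μ, f.HasEigenvalue μ ↔ μ = μ₁ ∨ μ = μ₂ := fun μ ↦ by
    rw [hasEigenvalue_iff_isRoot_charpoly, ← Polynomial.mem_roots f.charpoly_monic.ne_zero,
      hroots]
    simp
  obtain ⟨e₁, he₁, hE₁⟩ :=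
    ((hspec μ₁).mpr (.inl rfl)).exists_eigenspace_eq_span_singleton hM (hf μ₁)
  obtain ⟨e₂, he₂, hE₂⟩ :=
    ((hspec μ₂).mpr (.inr rfl)).exists_eigenspace_eq_span_singleton hM (hf μ₂)
  refine ⟨μ₁, μ₂, e₁, e₂, he₁, he₂, fun μ x hx ↦ ?_⟩
  rcases (hspec μ).mp (hasEigenvalue_of_hasEigenvector hx) with rfl | rfl
  · exact .inl (hE₁ ▸ hx.1)
  · exact .inr (hE₂ ▸ hx.1)

end Module.End

namespace LinearMap

variable {B B' : M →ₗ[K] N →ₗ[K] K}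

theorem SeparatingRight.exists_compl₂_eq [FiniteDimensional K M] [FiniteDimensional K N]
    (hB : B.SeparatingRight) (hdim : finrank K M = finrank K N) (B' : M →ₗ[K] N →ₗ[K] K) :
    ∃ φ : End K N, B.compl₂ φ = B' := by
  have hinj : Function.Injective B.flip := by
    rw [← ker_eq_bot, ← separatingRight_iff_flip_ker_eq_bot]
    exact hB
  let e := B.flip.linearEquivOfInjective hinj (by rw [Subspace.dual_finrank_eq, hdim])
  refine ⟨e.symm.toLinearMap ∘ₗ B'.flip, ext₂ fun x y ↦ ?_⟩
  exact congr($(e.apply_symm_apply (B'.flip y)) x)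

theorem SeparatingLeft.exists_hasEigenvector [FiniteDimensional K N] (hB : B.SeparatingLeft)
    (hN : finrank K N = 2) {φ : End K N} {x : M} {y : N} (hx : x ≠ 0) (hy : y ≠ 0)
    (h : B x y = 0) (hφ : B x (φ y) = 0) : ∃ μ, φ.HasEigenvector μ y := by
  have hker : ker (B x) ≠ ⊤ := fun htop ↦
    hx <| separatingLeft_iff_linear_nontrivial.mp hB x (ker_eq_top.mp htop)
  obtain ⟨μ, hμ⟩ := exists_smul_eq_of_mem_of_ne_top hN hker h hy hφ
  exact ⟨μ, Module.End.mem_eigenspace_iff.mpr hμ.symm, hy⟩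

theorem SeparatingRight.exists_forall_apply_eq_zero_iff [FiniteDimensional K M]
    (hB : B.SeparatingRight) (hM : finrank K M = 2) {y : N} (hy : y ≠ 0) :
    ∃ k : M, k ≠ 0 ∧ ∀ x, B x y = 0 ↔ x ∈ K ∙ k := by
  have hbot : ker (B.flip y) ≠ ⊥ := ker_ne_bot_of_finrank_lt (by rw [finrank_self, hM]; norm_num)
  have htop : ker (B.flip y) ≠ ⊤ := fun htop ↦
    hy <| separatingRight_iff_linear_flip_nontrivial.mp hB y (ker_eq_top.mp htop)
  obtain ⟨k, hk, hk0⟩ := exists_mem_ne_zero_of_ne_bot hbot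
  refine ⟨k, hk0, fun x ↦ ⟨fun hx ↦ ?_, fun hx ↦ ?_⟩⟩
  · exact mem_span_singleton.mpr (exists_smul_eq_of_mem_of_ne_top hM htop hk hk0 hx)
  · obtain ⟨c, rfl⟩ := mem_span_singleton.mp hx
    simp [show B k y = 0 from hk]

theorem apply_eq_zero_and_apply_apply_eq_zero_iff {φ : End K N} {μ : K} {k : M} {e y : N}
    (he : φ.HasEigenvector μ e) (hk : ∀ x, B x e = 0 ↔ x ∈ K ∙ k) (hy : y ∈ K ∙ e) (hy0 : y ≠ 0)
    (x : M) : B x y = 0 ∧ B x (φ y) = 0 ↔ x ∈ K ∙ k := by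
  obtain ⟨c, rfl⟩ := mem_span_singleton.mp hy
  have hc : c ≠ 0 := by
    rintro rfl
    simp at hy0
  refine ⟨fun ⟨h, _⟩ ↦ by simpa [hc, hk] using h, fun hx ↦ ?_⟩
  simp [he.apply_eq_smul, (hk x).mpr hx]

theorem Nondegenerate.exists_common_zero_iff [IsAlgClosed K] [FiniteDimensional K M]
    [FiniteDimensional K N] (hB : B.Nondegenerate) (hM : finrank K M = 2) (hN : finrank K N = 2)
    (hB' : ∀ c : K, B' ≠ c • B) :
    ∃ (k₁ k₂ : M) (e₁ e₂ : N), k₁ ≠ 0 ∧ k₂ ≠ 0 ∧ e₁ ≠ 0 ∧ e₂ ≠ 0 ∧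
      ∀ x y, B x y = 0 ∧ B' x y = 0 ↔
        x = 0 ∨ y = 0 ∨ (x ∈ K ∙ k₁ ∧ y ∈ K ∙ e₁) ∨ (x ∈ K ∙ k₂ ∧ y ∈ K ∙ e₂) := by
  obtain ⟨φ, rfl⟩ := hB.2.exists_compl₂_eq (hM.trans hN.symm) B'
  have hφ : ∀ c : K, φ ≠ c • 1 := by
    rintro c rfl
    exact hB' c (ext₂ fun x y ↦ by simp)
  obtain ⟨μ₁, μ₂, e₁, e₂, he₁, he₂, heig⟩ := φ.exists_hasEigenvector_of_finrank_eq_two hN hφ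
  obtain ⟨k₁, hk₁, hK₁⟩ := hB.2.exists_forall_apply_eq_zero_iff hM he₁.2
  obtain ⟨k₂, hk₂, hK₂⟩ := hB.2.exists_forall_apply_eq_zero_iff hM he₂.2
  refine ⟨k₁, k₂, e₁, e₂, hk₁, hk₂, he₁.2, he₂.2, fun x y ↦ ?_⟩
  rw [compl₂_apply]
  by_cases hx : x = 0
  · simp [hx]
  by_cases hy : y = 0
  · simp [hy]
  have hline₁ := apply_eq_zero_and_apply_apply_eq_zero_iff he₁ hK₁ (y := y) (x := x)
  have hline₂ := apply_eq_zero_and_apply_apply_eq_zero_iff he₂ hK₂ (y := y) (x := x)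
  constructor
  · rintro ⟨h, h'⟩
    obtain ⟨μ, hμ⟩ := hB.1.exists_hasEigenvector hN hx hy h h'
    rcases heig μ y hμ with hy₁ | hy₂
    · exact .inr <| .inr <| .inl ⟨(hline₁ hy₁ hy).mp ⟨h, h'⟩, hy₁⟩
    · exact .inr <| .inr <| .inr ⟨(hline₂ hy₂ hy).mp ⟨h, h'⟩, hy₂⟩
  · rintro (hx' | hy' | ⟨hx₁, hy₁⟩ | ⟨hx₂, hy₂⟩)
    · exact absurd hx' hx
    · exact absurd hy' hy
    · exact (hline₁ hy₁ hy).mpr hx₁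
    · exact (hline₂ hy₂ hy).mpr hx₂

end LinearMap

end Pencil

section Quadric

variable {K V : Type*} [Field K] [AddCommGroup V] [Module K V] {q q' : QuadraticForm K V}
  {U U' : Submodule K V}

open QuadraticMap

theorem forall_mem_span_singleton_apply_eq_zero_iff (q : QuadraticForm K V) (v : V) :
    (∀ w ∈ K ∙ v, q w = 0) ↔ q v = 0 := by
  refine ⟨fun h ↦ h v (mem_span_singleton_self v), fun h w hw ↦ ?_⟩
  obtain ⟨c, rfl⟩ := mem_span_singleton.mp hw
  rw [QuadraticMap.map_smul, h, smul_zero]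

theorem polar_eq_zero_of_isotropic {W : Submodule K V} (hW : ∀ v ∈ W, q v = 0) {u v : V}
    (hu : u ∈ W) (hv : v ∈ W) : polar q u v = 0 := by
  simp [polar, hW _ (add_mem hu hv), hW _ hu, hW _ hv]

def polarPairing (q : QuadraticForm K V) (U U' : Submodule K V) : U →ₗ[K] U' →ₗ[K] K :=
  (polarBilin q).compl₁₂ U.subtype U'.subtype

@[simp]
theorem polarPairing_apply (u : U) (u' : U') : polarPairing q U U' u u' = polar q u u' := rfl

theorem polarPairing_flip : (polarPairing q U U').flip = polarPairing q U' U :=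
  LinearMap.ext₂ fun _ _ ↦ polar_comm q _ _

theorem apply_add_eq_polarPairing (hU : ∀ v ∈ U, q v = 0) (hU' : ∀ v ∈ U', q v = 0) (u : U)
    (u' : U') : q (u + u') = polarPairing q U U' u u' := by
  rw [polarPairing_apply, polar, hU u u.2, hU' u' u'.2, sub_zero, sub_zero]

theorem polarPairing_separatingRight (hq : ∀ v, (∀ w, polar q v w = 0) → v = 0)
    (h : Codisjoint U U') (hU' : ∀ v ∈ U', q v = 0) : (polarPairing q U U').SeparatingRight := by
  intro y hy
  refine Subtype.ext (hq y fun w ↦ ?_)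
  obtain ⟨u, hu, u', hu', rfl⟩ := mem_sup.mp (h.eq_top ▸ mem_top : w ∈ U ⊔ U')
  rw [polar_add_right, polar_comm, ← polarPairing_apply (U' := U') ⟨u, hu⟩ y, hy,
    polar_eq_zero_of_isotropic hU' y.2 hu', zero_add]

theorem polarPairing_nondegenerate (hq : ∀ v, (∀ w, polar q v w = 0) → v = 0)
    (h : IsCompl U U') (hU : ∀ v ∈ U, q v = 0) (hU' : ∀ v ∈ U', q v = 0) :
    (polarPairing q U U').Nondegenerate :=
  ⟨by rw [← LinearMap.flip_separatingRight, polarPairing_flip]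
      exact polarPairing_separatingRight hq h.symm.codisjoint hU,
    polarPairing_separatingRight hq h.codisjoint hU'⟩

theorem eq_smul_of_polarPairing_eq_smul (h : IsCompl U U') (hUq : ∀ v ∈ U, q v = 0)
    (hU'q : ∀ v ∈ U', q v = 0) (hUq' : ∀ v ∈ U, q' v = 0) (hU'q' : ∀ v ∈ U', q' v = 0) {c : K}
    (hc : polarPairing q' U U' = c • polarPairing q U U') : q' = c • q := by
  ext v
  obtain ⟨⟨u, u'⟩, rfl⟩ := (prodEquivOfIsCompl U U' h).surjective v
  simp [apply_add_eq_polarPairing hUq hU'q, apply_add_eq_polarPairing hUq' hU'q', hc]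

theorem coe_add_coe_mem_left_iff (h : Disjoint U U') (u : U) (u' : U') :
    (u + u' : V) ∈ U ↔ u' = 0 := by
  rw [Submodule.add_mem_iff_right U u.2]
  exact ⟨fun hu' ↦ by simpa using disjoint_def.mp h _ hu' u'.2, by rintro rfl; simp⟩

theorem coe_add_coe_mem_right_iff (h : Disjoint U U') (u : U) (u' : U') :
    (u + u' : V) ∈ U' ↔ u = 0 := by
  rw [Submodule.add_mem_iff_left U' u'.2]
  exact ⟨fun hu ↦ by simpa using disjoint_def.mp h _ u.2 hu, by rintro rfl; simp⟩

theorem coe_add_coe_mem_span_pair_iff (h : IsCompl U U') (k u : U) (e u' : U') :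
    (u + u' : V) ∈ span K {(k : V), (e : V)} ↔ u ∈ K ∙ k ∧ u' ∈ K ∙ e := by
  rw [mem_span_pair, mem_span_singleton, mem_span_singleton]
  constructor
  · rintro ⟨a, b, hab⟩
    have := (prodEquivOfIsCompl U U' h).injective (a₁ := (a • k, b • e)) (a₂ := (u, u'))
      (by simpa using hab)
    simp only [Prod.mk.injEq] at this
    exact ⟨⟨a, this.1⟩, ⟨b, this.2⟩⟩
  · rintro ⟨⟨a, rfl⟩, ⟨b, rfl⟩⟩
    exact ⟨a, b, by simp⟩

theorem finrank_span_pair_eq_two_and_inf_ne_bot (h : Disjoint U U') {k : U} {e : U'}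
    (hk : k ≠ 0) (he : e ≠ 0) :
    finrank K (span K {(k : V), (e : V)}) = 2 ∧ span K {(k : V), (e : V)} ⊓ U ≠ ⊥ ∧
      span K {(k : V), (e : V)} ⊓ U' ≠ ⊥ := by
  have hk' : (k : V) ≠ 0 := by simpa using hk
  have he' : (e : V) ≠ 0 := by simpa using he
  have hinf : (K ∙ (k : V)) ⊓ (K ∙ (e : V)) = ⊥ :=
    (h.mono ((span_singleton_le_iff_mem _ _).mpr k.2)
      ((span_singleton_le_iff_mem _ _).mpr e.2)).eq_bot
  have hdim := finrank_sup_add_finrank_inf_eq (K ∙ (k : V)) (K ∙ (e : V))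
  rw [hinf, finrank_bot, finrank_span_singleton hk', finrank_span_singleton he'] at hdim
  refine ⟨by rw [span_insert]; omega, ?_, ?_⟩
  · exact (Submodule.ne_bot_iff _).mpr ⟨k, ⟨subset_span (by simp), k.2⟩, hk'⟩
  · exact (Submodule.ne_bot_iff _).mpr ⟨e, ⟨subset_span (by simp), e.2⟩, he'⟩

end Quadric

theorem quadric_intersection_eq_four_lines_general
    (q q' : QuadraticForm ℂ (Fin 4 → ℂ))
    (hq : ∀ v : Fin 4 → ℂ, (∀ w, QuadraticMap.polar q v w = 0) → v = 0)
    (hprop : ∀ c : ℂ, q' ≠ c • q)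
    (U U' : Submodule ℂ (Fin 4 → ℂ))
    (hU : Module.finrank ℂ U = 2) (hU' : Module.finrank ℂ U' = 2)
    (hskew : U ⊓ U' = ⊥)
    (hUq : ∀ v ∈ U, q v = 0) (hUq' : ∀ v ∈ U, q' v = 0)
    (hU'q : ∀ v ∈ U', q v = 0) (hU'q' : ∀ v ∈ U', q' v = 0) :
    ∃ S S' : Submodule ℂ (Fin 4 → ℂ),
      Module.finrank ℂ S = 2 ∧ Module.finrank ℂ S' = 2 ∧
      S ⊓ U ≠ ⊥ ∧ S ⊓ U' ≠ ⊥ ∧ S' ⊓ U ≠ ⊥ ∧ S' ⊓ U' ≠ ⊥ ∧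
      {p : ℙ ℂ (Fin 4 → ℂ) | (∀ v ∈ p.submodule, q v = 0) ∧ ∀ v ∈ p.submodule, q' v = 0}
        = {p : ℙ ℂ (Fin 4 → ℂ) | p.submodule ≤ U} ∪ {p | p.submodule ≤ U'}
          ∪ {p | p.submodule ≤ S} ∪ {p | p.submodule ≤ S'} := by
  have hUU' : IsCompl U U' :=
    (isCompl_iff_disjoint U U' (by simp [hU, hU'])).mpr (disjoint_iff.mpr hskew)
  have hB' : ∀ c : ℂ, polarPairing q' U U' ≠ c • polarPairing q U U' := fun c hc ↦
    hprop c (eq_smul_of_polarPairing_eq_smul hUU' hUq hU'q hUq' hU'q' hc)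
  obtain ⟨k₁, k₂, e₁, e₂, hk₁, hk₂, he₁, he₂, hzero⟩ :=
    (polarPairing_nondegenerate hq hUU' hUq hU'q).exists_common_zero_iff hU hU' hB'
  obtain ⟨hS₁, hS₁U, hS₁U'⟩ := finrank_span_pair_eq_two_and_inf_ne_bot hUU'.disjoint hk₁ he₁
  obtain ⟨hS₂, hS₂U, hS₂U'⟩ := finrank_span_pair_eq_two_and_inf_ne_bot hUU'.disjoint hk₂ he₂
  refine ⟨_, _, hS₁, hS₂, hS₁U, hS₁U', hS₂U, hS₂U', ?_⟩
  ext p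
  induction p using Projectivization.ind with | h v _ => ?_
  obtain ⟨⟨u, u'⟩, rfl⟩ := (prodEquivOfIsCompl U U' hUU').surjective v
  simp only [Set.mem_ofPred_eq, Set.mem_union, submodule_mk, span_singleton_le_iff_mem,
    forall_mem_span_singleton_apply_eq_zero_iff, coe_prodEquivOfIsCompl',
    apply_add_eq_polarPairing hUq hU'q, apply_add_eq_polarPairing hUq' hU'q', hzero,
    coe_add_coe_mem_left_iff hUU'.disjoint, coe_add_coe_mem_right_iff hUU'.disjoint,
    coe_add_coe_mem_span_pair_iff hUU']
  tauto

/-- Let `q, q'` be nondegenerate, non-proportional quadratic forms on `ℂ⁴`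
whose quadric surfaces `Q = V(q)` and `Q' = V(q')` in `ℙ³` both contain two given skew
lines `R = ℙ(U)` and `R' = ℙ(U')`.  Then there are lines `S, S'` in `ℙ³` (possibly equal),
each meeting both `R` and `R'`, with `Q ∩ Q' = R ∪ R' ∪ S ∪ S'`. -/
theorem quadric_intersection_eq_four_lines
    (q q' : QuadraticForm ℂ (Fin 4 → ℂ))
    (hq : ∀ v : Fin 4 → ℂ, (∀ w, QuadraticMap.polar q v w = 0) → v = 0)
    (hq' : ∀ v : Fin 4 → ℂ, (∀ w, QuadraticMap.polar q' v w = 0) → v = 0)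
    (hprop : ∀ c : ℂ, q' ≠ c • q)
    (U U' : Submodule ℂ (Fin 4 → ℂ))
    (hU : Module.finrank ℂ U = 2) (hU' : Module.finrank ℂ U' = 2)
    (hskew : U ⊓ U' = ⊥)
    (hUq : ∀ v ∈ U, q v = 0) (hUq' : ∀ v ∈ U, q' v = 0)
    (hU'q : ∀ v ∈ U', q v = 0) (hU'q' : ∀ v ∈ U', q' v = 0) :
    ∃ S S' : Submodule ℂ (Fin 4 → ℂ),
      Module.finrank ℂ S = 2 ∧ Module.finrank ℂ S' = 2 ∧
      S ⊓ U ≠ ⊥ ∧ S ⊓ U' ≠ ⊥ ∧ S' ⊓ U ≠ ⊥ ∧ S' ⊓ U' ≠ ⊥ ∧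
      {p : ℙ ℂ (Fin 4 → ℂ) | (∀ v ∈ p.submodule, q v = 0) ∧ ∀ v ∈ p.submodule, q' v = 0}
        = {p : ℙ ℂ (Fin 4 → ℂ) | p.submodule ≤ U} ∪ {p | p.submodule ≤ U'}
          ∪ {p | p.submodule ≤ S} ∪ {p | p.submodule ≤ S'} :=
  quadric_intersection_eq_four_lines_general q q' hq hprop U U' hU hU' hskew hUq hUq' hU'q hU'q'
end

section
/- Assume the half-grid hypotheses for a 16-point set Z = Z_a ∪ Z_b ∪ Z_c ∪ Z_d on four pairwise skew lines R_a, R_b, R_c, R_d in ℙ³. Then there exist two distinct lines S ≠ S' in ℙ³, each of which meets all four lines R_a, R_b, R_c, R_d (i.e., there are two distinct transversals to the four lines). -/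
open Projectivization
open scoped LinearAlgebra.Projectivization

/-- The half-grid hypotheses for a 16-point set `Z = Z 0 ∪ Z 1 ∪ Z 2 ∪ Z 3` distributed
evenly on four pairwise skew lines `R 0, …, R 3` in `ℙ³` (lines are given by their
2-dimensional subspaces of `ℂ⁴`):
* each `Z x` consists of 4 distinct points of the line `ℙ(R x)`;
* no nonzero homogeneous quadratic form on `ℂ⁴` vanishes at all points of `Z`;
* for each `x`, the 12 points `Z ∖ Z x` form a (3,4)-grid with respect to the remaining
  three lines: there are four pairwise skew lines `ℓ 0, …, ℓ 3`, each meeting each line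
  `ℙ(R y)` (`y ≠ x`) in exactly one point, the 12 intersection points being exactly
  `Z ∖ Z x`. -/
structure HalfGridHyp (R : Fin 4 → Submodule ℂ (Fin 4 → ℂ))
    (Z : Fin 4 → Set (ℙ ℂ (Fin 4 → ℂ))) : Prop where
  finrank_eq : ∀ x, Module.finrank ℂ (R x) = 2
  skew : ∀ x y, x ≠ y → R x ⊓ R y = ⊥
  ncard_eq : ∀ x, (Z x).ncard = 4
  mem_line : ∀ x, ∀ p ∈ Z x, p.submodule ≤ R x
  no_quadric : ¬ ∃ q : QuadraticForm ℂ (Fin 4 → ℂ), q ≠ 0 ∧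
    ∀ x, ∀ p ∈ Z x, ∀ v ∈ Projectivization.submodule p, q v = 0
  grid : ∀ x : Fin 4, ∃ ℓ : Fin 4 → Submodule ℂ (Fin 4 → ℂ),
    (∀ i, Module.finrank ℂ (ℓ i) = 2) ∧
    (∀ i j, i ≠ j → ℓ i ⊓ ℓ j = ⊥) ∧
    (∀ i, ∀ y, y ≠ x → ∃! p : ℙ ℂ (Fin 4 → ℂ),
      p.submodule ≤ ℓ i ∧ p.submodule ≤ R y) ∧
    {p : ℙ ℂ (Fin 4 → ℂ) | ∃ i y, y ≠ x ∧ p.submodule ≤ ℓ i ∧ p.submodule ≤ R y}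
      = (⋃ y, Z y) \ Z x

/-!
`R 2` and `R 3` are complementary in `ℂ⁴` and `R 0`, `R 1` are skew to both, so `R 0` and `R 1`
are the graphs of isomorphisms `A, B : R 2 → R 3`. For an eigenvector `v` of `A⁻¹ B` the line
spanned by `v` and `A v` meets `R 2`, `R 3`, `R 0` (in `v + A v`) and `R 1` (in `v + B v`), so two
independent eigenvectors give two distinct transversals.

A line of the grid on `Z ∖ Z 1` through a point `[u]` of `Z 2` meets `R 3` and `R 0`, which forces
it to pass through `[A u]`; hence `A`, and likewise `B`, maps `Z 2` into `Z 3`, so `A⁻¹ B` permutes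
the four points of `Z 2` and some power `(A⁻¹ B) ^ k` fixes two of them. Were `A⁻¹ B` not
diagonalizable, it would be `c + N` with `N ^ 2 = 0` and `c ≠ 0`, and
`(A⁻¹ B) ^ k = c ^ k + k c ^ (k - 1) N` would fix no point of `ℙ(R 2)` besides `ker N`.
-/

open Module Submodule Set

section LinearAlgebra

variable {K V : Type*} [Field K] [AddCommGroup V] [Module K V] {W₁ W₂ : Submodule K V}

theorem finrank_span_pair {u w : V} (h : LinearIndependent K ![u, w]) :
    finrank K (span K {u, w}) = 2 := by
  rw [← Matrix.range_cons_cons_empty]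
  simpa using finrank_span_eq_card h

theorem linearIndependent_pair_of_inf_eq_bot (h : W₁ ⊓ W₂ = ⊥) {u w : V} (hu : u ∈ W₁)
    (hw : w ∈ W₂) (hu₀ : u ≠ 0) (hw₀ : w ≠ 0) : LinearIndependent K ![u, w] := by
  refine LinearIndependent.pair_iff.mpr fun s t hst => ?_
  have hsu : s • u ∈ W₁ ⊓ W₂ :=
    ⟨smul_mem _ _ hu, (eq_neg_of_add_eq_zero_left hst).symm ▸ neg_mem (smul_mem _ _ hw)⟩
  rw [h, mem_bot, smul_eq_zero] at hsu
  obtain rfl : s = 0 := hsu.resolve_right hu₀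
  simpa [hw₀] using hst

theorem Submodule.exists_linearEquiv_forall_add_mem [FiniteDimensional K V] {L : Submodule K V}
    (h : IsCompl W₁ W₂) (hL₁ : L ⊓ W₁ = ⊥) (hL₂ : L ⊓ W₂ = ⊥)
    (hdim₁ : finrank K L = finrank K W₁) (hdim₂ : finrank K L = finrank K W₂) :
    ∃ A : W₁ ≃ₗ[K] W₂, (∀ u : W₁, (u : V) + A u ∈ L) ∧ ∀ v ∈ L, ∃ u : W₁, v = u + A u := by
  have proj_injective {W W' : Submodule K V} (hWW' : IsCompl W W') (hLW' : L ⊓ W' = ⊥) :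
      Function.Injective (W.projectionOnto W' hWW' ∘ₗ L.subtype) := by
    rw [← LinearMap.ker_eq_bot, eq_bot_iff]
    rintro ⟨x, hx⟩ hx'
    have : x ∈ L ⊓ W' := ⟨hx, (projectionOnto_apply_eq_zero_iff hWW').mp hx'⟩
    simpa [hLW'] using this
  let e₁ := LinearMap.linearEquivOfInjective _ (proj_injective h hL₂) hdim₁
  let e₂ := LinearMap.linearEquivOfInjective _ (proj_injective h.symm hL₁) hdim₂
  have decomp (x : L) : ((e₁ x : W₁) : V) + (e₂ x : W₂) = x :=
    projection_add_projection_eq_self h x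
  refine ⟨e₁.symm.trans e₂, fun u => ?_, fun v hv => ⟨e₁ ⟨v, hv⟩, ?_⟩⟩
  · have := decomp (e₁.symm u)
    rw [LinearEquiv.apply_symm_apply] at this
    simp [this]
  · simpa using (decomp ⟨v, hv⟩).symm

theorem Submodule.apply_mem_of_add_apply_mem {ℓ : Submodule K V} (h : W₁ ⊓ W₂ = ⊥)
    (hℓ : finrank K ℓ = 2) (A : W₁ →ₗ[K] W₂) {u r : W₁} {w : V} (hu : (u : V) ∈ ℓ)
    (hw : w ∈ ℓ ⊓ W₂) (hw₀ : w ≠ 0) (hr : (r : V) + A r ∈ ℓ) (hr₀ : r ≠ 0) :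
    (A u : V) ∈ ℓ := by
  rcases eq_or_ne u 0 with rfl | hu₀
  · simp
  have hind := linearIndependent_pair_of_inf_eq_bot h u.2 hw.2 (by simpa using hu₀) hw₀
  have hspan : span K {(u : V), w} = ℓ := by
    have : FiniteDimensional K ℓ := .of_finrank_pos (by omega)
    refine eq_of_le_of_finrank_le (span_le.mpr ?_) ?_
    · simp [insert_subset_iff, hu, hw.1]
    · rw [hℓ, finrank_span_pair hind]
  obtain ⟨α, β, hαβ⟩ := mem_span_pair.mp (hspan ▸ hr)
  -- the `W₁`-components of both sides of `α u + β w = r + A r` agree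
  have hr_eq : (r : V) = α • u := by
    have : (r : V) - α • u ∈ W₁ ⊓ W₂ := by
      refine ⟨sub_mem r.2 (smul_mem _ _ u.2), ?_⟩
      rw [show (r : V) - α • u = β • w - A r by
        rw [← sub_eq_zero]; linear_combination (norm := module) -hαβ]
      exact sub_mem (smul_mem _ _ hw.2) (A r).2
    rwa [h, mem_bot, sub_eq_zero] at this
  have hα : α ≠ 0 := by rintro rfl; exact hr₀ (by simpa using hr_eq)
  have hAr : (A r : V) = α • A u := by
    rw [show r = α • u from Subtype.ext hr_eq, map_smul, coe_smul]
  have : α • (A u : V) ∈ ℓ := by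
    rw [← hAr, show (A r : V) = (r + A r) - α • u by rw [← hr_eq]; abel]
    exact sub_mem hr (smul_mem _ _ hu)
  simpa [hα] using smul_mem _ α⁻¹ this

theorem span_pair_apply_inf_ne_bot (h : W₁ ⊓ W₂ = ⊥) (A B : W₁ →ₗ[K] W₂) {L : Submodule K V}
    (hL : ∀ u : W₁, (u : V) + B u ∈ L) {v : W₁} (hv : v ≠ 0) {a : K} (hBv : B v = a • A v) :
    span K {(v : V), (A v : V)} ⊓ L ≠ ⊥ := by
  refine (Submodule.ne_bot_iff _).mpr ⟨v + B v, ⟨?_, hL v⟩, fun h0 => hv ?_⟩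
  · rw [hBv, coe_smul]
    exact add_mem (subset_span (by simp)) (smul_mem _ _ (subset_span (by simp)))
  · have : (v : V) ∈ W₁ ⊓ W₂ := ⟨v.2, eq_neg_of_add_eq_zero_left h0 ▸ neg_mem (B v).2⟩
    simpa [h] using this

theorem span_pair_apply_ne (h : W₁ ⊓ W₂ = ⊥) (A : W₁ →ₗ[K] W₂) {v₁ v₂ : W₁}
    (hv : LinearIndependent K ![v₁, v₂]) :
    span K {(v₁ : V), (A v₁ : V)} ≠ span K {(v₂ : V), (A v₂ : V)} := by
  intro hS
  have hv₂ : (v₂ : V) ∈ span K {(v₁ : V), (A v₁ : V)} := by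
    rw [hS]; exact subset_span (by simp)
  obtain ⟨α, β, hαβ⟩ := mem_span_pair.mp hv₂
  have : (v₂ : V) - α • v₁ ∈ W₁ ⊓ W₂ := by
    refine ⟨sub_mem v₂.2 (smul_mem _ _ v₁.2), ?_⟩
    rw [← hαβ, add_sub_cancel_left]
    exact smul_mem _ _ (A v₁).2
  rw [h, mem_bot, sub_eq_zero] at this
  have := LinearIndependent.pair_iff.mp hv α (-1) (by rw [← Subtype.coe_inj]; simp [this])
  simp at this

theorem exists_two_transversals_of_eigenvectors {R : Fin 4 → Submodule K V}
    (h : R 2 ⊓ R 3 = ⊥) (A B : R 2 ≃ₗ[K] R 3) (hA : ∀ u : R 2, (u : V) + A u ∈ R 0)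
    (hB : ∀ u : R 2, (u : V) + B u ∈ R 1) {v₁ v₂ : R 2} (hv : LinearIndependent K ![v₁, v₂])
    (h₁ : ∃ a : K, A.symm (B v₁) = a • v₁) (h₂ : ∃ a : K, A.symm (B v₂) = a • v₂) :
    ∃ S S' : Submodule K V, finrank K S = 2 ∧ finrank K S' = 2 ∧ S ≠ S' ∧
      (∀ x, S ⊓ R x ≠ ⊥) ∧ (∀ x, S' ⊓ R x ≠ ⊥) := by
  have transversal (v : R 2) (hv : v ≠ 0) (hBv : ∃ a : K, A.symm (B v) = a • v) :
      finrank K (span K {(v : V), (A v : V)}) = 2 ∧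
        ∀ x, span K {(v : V), (A v : V)} ⊓ R x ≠ ⊥ := by
    obtain ⟨a, ha⟩ := hBv
    have hAv : A v ≠ 0 := by simpa using hv
    have hBv : B v = a • A v := by rw [← map_smul, ← ha, LinearEquiv.apply_symm_apply]
    refine ⟨finrank_span_pair (linearIndependent_pair_of_inf_eq_bot h v.2 (A v).2
      (by simpa using hv) (by simpa using hAv)), fun x => ?_⟩
    fin_cases x
    · exact span_pair_apply_inf_ne_bot h A A hA hv (one_smul K _).symm
    · exact span_pair_apply_inf_ne_bot h A B hB hv hBv
    · exact (Submodule.ne_bot_iff _).mpr ⟨v, ⟨subset_span (by simp), v.2⟩, by simpa using hv⟩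
    · exact (Submodule.ne_bot_iff _).mpr
        ⟨A v, ⟨subset_span (by simp), (A v).2⟩, by simpa using hAv⟩
  obtain ⟨hS₁, hR₁⟩ := transversal v₁ (hv.ne_zero 0) h₁
  obtain ⟨hS₂, hR₂⟩ := transversal v₂ (hv.ne_zero 1) h₂
  exact ⟨_, _, hS₁, hS₂, span_pair_apply_ne h A hv, hR₁, hR₂⟩

end LinearAlgebra

theorem Commute.add_pow_succ_of_sq_eq_zero {R : Type*} [Semiring R] {a b : R} (h : Commute a b)
    (hb : b ^ 2 = 0) (n : ℕ) : (a + b) ^ (n + 1) = a ^ (n + 1) + (n + 1 : ℕ) • (a ^ n * b) := by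
  induction n with
  | zero => simp
  | succ n ih =>
    have hbb : b * b = 0 := by rw [← sq, hb]
    simp only [pow_succ _ (n + 1), ih, add_mul, mul_add, smul_mul_assoc, mul_assoc, ← h.eq, hbb,
      mul_zero, smul_zero, add_zero, pow_succ, succ_nsmul]
    abel

section Eigenvectors

variable {K W : Type*} [Field K] [AddCommGroup W] [Module K W]

open Polynomial in
theorem LinearMap.exists_charpoly_eq_mul [IsAlgClosed K] [FiniteDimensional K W]
    (hW : finrank K W = 2) (f : End K W) :
    ∃ a b : K, f.charpoly = (X - C a) * (X - C b) := by
  have hsplits : f.charpoly.Splits := IsAlgClosed.splits _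
  obtain ⟨a, b, hab⟩ : ∃ a b, f.charpoly.roots = {a, b} := by
    apply Multiset.card_eq_two.mp
    rw [splits_iff_card_roots.mp hsplits, f.charpoly_natDegree, hW]
  refine ⟨a, b, ?_⟩
  rw [hsplits.eq_prod_roots_of_monic f.charpoly_monic, hab]
  simp

theorem Module.End.apply_eq_smul_of_pow_apply_eq_smul [CharZero K] {f : End K W} {c : K}
    (hN : (f - algebraMap K (End K W) c) ^ 2 = 0) (hc : c ≠ 0) {k : ℕ} (hk : k ≠ 0) {v : W}
    {s : K} (hs : (f ^ k) v = s • v) : f v = c • v := by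
  set N := f - algebraMap K (End K W) c
  obtain ⟨n, rfl⟩ := Nat.exists_eq_succ_of_ne_zero hk
  have hpow := (Algebra.commute_algebraMap_left c N).add_pow_succ_of_sq_eq_zero hN n
  rw [show algebraMap K (End K W) c + N = f by simp [N]] at hpow
  have hNv : ((n + 1 : ℕ) * c ^ n) • N v = (s - c ^ (n + 1)) • v := by
    rw [sub_smul, ← hs, hpow]
    simp [mul_smul, ← map_pow, Module.algebraMap_end_apply]
    module
  have hNNv : N (N v) = 0 := by rw [← Module.End.mul_apply, ← sq, hN, LinearMap.zero_apply]
  have : (s - c ^ (n + 1)) • N v = 0 := by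
    rw [← map_smul, ← hNv, map_smul, hNNv, smul_zero]
  have hNv₀ : N v = 0 := by
    rcases smul_eq_zero.mp this with h | h
    · simpa [h, hc, Nat.cast_add_one_ne_zero] using hNv
    · exact h
  simpa [N, sub_eq_zero, Module.algebraMap_end_apply] using hNv₀

theorem Module.End.exists_linearIndependent_eigenvectors_of_pow [IsAlgClosed K] [CharZero K]
    [FiniteDimensional K W] (hW : finrank K W = 2) {f : End K W} (hf : Function.Injective f)
    {k : ℕ} (hk : k ≠ 0) {v₁ v₂ : W} (hv : LinearIndependent K ![v₁, v₂])
    (h₁ : ∃ s : K, (f ^ k) v₁ = s • v₁) (h₂ : ∃ s : K, (f ^ k) v₂ = s • v₂) :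
    ∃ w₁ w₂ : W, LinearIndependent K ![w₁, w₂] ∧ (∃ a : K, f w₁ = a • w₁) ∧
      ∃ b : K, f w₂ = b • w₂ := by
  obtain ⟨a, b, hab⟩ := LinearMap.exists_charpoly_eq_mul hW f
  by_cases hba : a = b
  · subst hba
    have hN : (f - algebraMap K (End K W) a) ^ 2 = 0 := by
      simpa [hab, sq] using f.aeval_self_charpoly
    have ha : a ≠ 0 := by
      rintro rfl
      have hf2 : f ^ 2 = 0 := by simpa using hN
      exact hv.ne_zero 0 (hf (hf (by simpa [sq] using congr($hf2 v₁))))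
    obtain ⟨s₁, hs₁⟩ := h₁
    obtain ⟨s₂, hs₂⟩ := h₂
    exact ⟨v₁, v₂, hv, ⟨a, apply_eq_smul_of_pow_apply_eq_smul hN ha hk hs₁⟩,
      ⟨a, apply_eq_smul_of_pow_apply_eq_smul hN ha hk hs₂⟩⟩
  · have hroot (μ : K) (hμ : f.charpoly.IsRoot μ) : f.HasEigenvalue μ :=
      (f.hasEigenvalue_iff_isRoot_charpoly μ).mpr hμ
    obtain ⟨w₁, hw₁⟩ := (hroot a (by simp [hab])).exists_hasEigenvector
    obtain ⟨w₂, hw₂⟩ := (hroot b (by simp [hab])).exists_hasEigenvector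
    refine ⟨w₁, w₂, ?_, ⟨a, hw₁.apply_eq_smul⟩, ⟨b, hw₂.apply_eq_smul⟩⟩
    exact f.eigenvectors_linearIndependent' ![a, b] (by simpa) _
      (Fin.forall_fin_two.mpr ⟨hw₁, hw₂⟩)

end Eigenvectors

theorem Set.MapsTo.exists_pow_smul_eq {G α : Type*} [Group G] [MulAction G α] {g : G}
    {s : Set α} (hs : s.Finite) (h : MapsTo (g • ·) s s) :
    ∃ n ≠ 0, ∀ x ∈ s, g ^ n • x = x := by
  have := hs.fintype
  have hinj : Function.Injective h.restrict := h.restrict_inj.mpr (MulAction.injective g).injOn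
  refine ⟨(Fintype.card s).factorial, Nat.factorial_ne_zero _, fun x hx => ?_⟩
  have hid := Function.injective_iff_iterate_factorial_card_eq_id.mp hinj
  have := congr(Subtype.val ($hid ⟨x, hx⟩))
  rwa [h.iterate_restrict, MapsTo.val_restrict_apply, smul_iterate] at this

section Projective

variable {K V : Type*} [Field K] [AddCommGroup V] [Module K V]

theorem Projectivization.rep_mem_submodule (p : ℙ K V) : p.rep ∈ p.submodule :=
  p.submodule_eq ▸ mem_span_singleton_self _

def Submodule.projIncl (W : Submodule K V) : ℙ K W → ℙ K V :=
  Projectivization.map W.subtype W.injective_subtype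

@[simp]
theorem Submodule.projIncl_mk (W : Submodule K V) (u : W) (hu : u ≠ 0) :
    W.projIncl (Projectivization.mk K u hu) = Projectivization.mk K (u : V) (by simpa using hu) :=
  rfl

theorem Submodule.projIncl_injective (W : Submodule K V) : Function.Injective W.projIncl :=
  Projectivization.map_injective _ _

theorem Submodule.mem_range_projIncl {W : Submodule K V} {p : ℙ K V} (h : p.submodule ≤ W) :
    p ∈ range W.projIncl :=
  ⟨Projectivization.mk K ⟨p.rep, h p.rep_mem_submodule⟩ (by simpa using p.rep_nonzero),
    by simp [mk_rep]⟩

theorem Projectivization.smul_eq_self_iff {W : Type*} [AddCommGroup W] [Module K W]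
    (g : W ≃ₗ[K] W) (p : ℙ K W) : g • p = p ↔ ∃ a : K, g p.rep = a • p.rep := by
  conv_lhs => rw [← mk_rep p, smul_mk, mk_eq_mk_iff']
  simp [eq_comm]

theorem LinearEquiv.exists_linearIndependent_eigenvectors_of_pow_smul_eq [IsAlgClosed K]
    [CharZero K] [FiniteDimensional K V] (hV : finrank K V = 2) (f : V ≃ₗ[K] V) {k : ℕ}
    (hk : k ≠ 0) {p q : ℙ K V} (hpq : p ≠ q) (hp : f ^ k • p = p) (hq : f ^ k • q = q) :
    ∃ w₁ w₂ : V, LinearIndependent K ![w₁, w₂] ∧ (∃ a : K, f w₁ = a • w₁) ∧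
      ∃ b : K, f w₂ = b • w₂ := by
  have eigen {p : ℙ K V} (hp : f ^ k • p = p) :
      ∃ s : K, ((f : End K V) ^ k) p.rep = s • p.rep := by
    simpa [smul_eq_self_iff, LinearEquiv.pow_apply, Module.End.pow_apply] using hp
  exact Module.End.exists_linearIndependent_eigenvectors_of_pow hV f.injective hk
    (linearIndependent_pair_iff_ne.mpr hpq) (eigen hp) (eigen hq)

end Projective

namespace HalfGridHyp

variable {R : Fin 4 → Submodule ℂ (Fin 4 → ℂ)} {Z : Fin 4 → Set (ℙ ℂ (Fin 4 → ℂ))}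

theorem isCompl (hyp : HalfGridHyp R Z) {x y : Fin 4} (hxy : x ≠ y) : IsCompl (R x) (R y) :=
  (isCompl_iff_disjoint _ _ (by simp [hyp.finrank_eq])).mpr (disjoint_iff.mpr (hyp.skew x y hxy))

theorem exists_graph (hyp : HalfGridHyp R Z) {x y z : Fin 4} (hxy : x ≠ y) (hxz : x ≠ z)
    (hyz : y ≠ z) : ∃ A : R y ≃ₗ[ℂ] R z, (∀ u : R y, (u : Fin 4 → ℂ) + A u ∈ R x) ∧
      ∀ v ∈ R x, ∃ u : R y, v = u + A u :=
  exists_linearEquiv_forall_add_mem (hyp.isCompl hyz) (hyp.skew x y hxy) (hyp.skew x z hxz)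
    (by simp [hyp.finrank_eq]) (by simp [hyp.finrank_eq])

theorem eq_of_mem_of_submodule_le (hyp : HalfGridHyp R Z) {x y : Fin 4} {p : ℙ ℂ (Fin 4 → ℂ)}
    (hp : p ∈ Z x) (h : p.submodule ≤ R y) : x = y := by
  by_contra hxy
  have hp₀ := le_inf (hyp.mem_line x p hp) h
  rw [hyp.skew x y hxy, le_bot_iff] at hp₀
  have h₁ := p.finrank_submodule
  rw [hp₀, finrank_bot] at h₁
  exact zero_ne_one h₁

theorem ncard_preimage_projIncl (hyp : HalfGridHyp R Z) (x : Fin 4) :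
    ((R x).projIncl ⁻¹' Z x).ncard = 4 := by
  rw [ncard_preimage_of_injective_subset_range (R x).projIncl_injective
    (fun p hp => mem_range_projIncl (hyp.mem_line x p hp)), hyp.ncard_eq]

theorem mapsTo_map_of_graph (hyp : HalfGridHyp R Z) {c d x g : Fin 4} (hcd : c ≠ d)
    (hcg : c ≠ g) (hdg : d ≠ g) (hxg : x ≠ g) (A : R c ≃ₗ[ℂ] R d)
    (hA : ∀ v ∈ R x, ∃ u : R c, v = u + A u) :
    MapsTo (Projectivization.map (A : R c →ₗ[ℂ] R d) A.injective) ((R c).projIncl ⁻¹' Z c)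
      ((R d).projIncl ⁻¹' Z d) := by
  intro p hp
  induction p using Projectivization.ind with | h u hu => ?_
  simp only [mem_preimage, projIncl_mk, map_mk, LinearEquiv.coe_coe] at hp ⊢
  obtain ⟨ℓ, hℓ, -, hmeet, hgrid⟩ := hyp.grid g
  have hpZ : Projectivization.mk ℂ (u : Fin 4 → ℂ) _ ∈ (⋃ y, Z y) \ Z g :=
    ⟨mem_iUnion.mpr ⟨c, hp⟩, fun h => hcg (hyp.eq_of_mem_of_submodule_le hp (hyp.mem_line g _ h))⟩
  rw [← hgrid] at hpZ
  obtain ⟨i, -, -, hpℓ, -⟩ := hpZ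
  obtain ⟨q, ⟨hqℓ, hqd⟩, -⟩ := hmeet i d hdg
  obtain ⟨r, ⟨hrℓ, hrx⟩, -⟩ := hmeet i x hxg
  obtain ⟨r', hr'⟩ := hA r.rep (hrx r.rep_mem_submodule)
  have hr'₀ : r' ≠ 0 := by rintro rfl; exact r.rep_nonzero (by simpa using hr')
  have hAu : ((A u : R d) : Fin 4 → ℂ) ∈ ℓ i :=
    apply_mem_of_add_apply_mem (hyp.skew c d hcd) (hℓ i) A
      (hpℓ (by simp [submodule_mk]))
      ⟨hqℓ q.rep_mem_submodule, hqd q.rep_mem_submodule⟩ q.rep_nonzero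
      (hr' ▸ hrℓ r.rep_mem_submodule) hr'₀
  have hAuZ : Projectivization.mk ℂ ((A u : R d) : Fin 4 → ℂ) (by simpa using hu) ∈
      (⋃ y, Z y) \ Z g := by
    rw [← hgrid]
    exact ⟨i, d, hdg, by simpa [submodule_mk] using hAu, by simp [submodule_mk]⟩
  obtain ⟨y, hy⟩ := mem_iUnion.mp hAuZ.1
  exact hyp.eq_of_mem_of_submodule_le (y := d) hy (by simp [submodule_mk]) ▸ hy

end HalfGridHyp

/-- Transversals to the four lines.
Under the half-grid hypotheses for a 16-point set on four pairwise skew lines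
`R 0, …, R 3` in `ℙ³`, there are two distinct lines `S ≠ S'`, each meeting all four
lines. -/
theorem exists_two_transversals
    (R : Fin 4 → Submodule ℂ (Fin 4 → ℂ)) (Z : Fin 4 → Set (ℙ ℂ (Fin 4 → ℂ)))
    (hyp : HalfGridHyp R Z) :
    ∃ S S' : Submodule ℂ (Fin 4 → ℂ),
      Module.finrank ℂ S = 2 ∧ Module.finrank ℂ S' = 2 ∧ S ≠ S' ∧
      (∀ x, S ⊓ R x ≠ ⊥) ∧ (∀ x, S' ⊓ R x ≠ ⊥) := by
  obtain ⟨A, hA, hA'⟩ := hyp.exists_graph (x := 0) (y := 2) (z := 3) (by decide) (by decide)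
    (by decide)
  obtain ⟨B, hB, hB'⟩ := hyp.exists_graph (x := 1) (y := 2) (z := 3) (by decide) (by decide)
    (by decide)
  have hAZ := hyp.mapsTo_map_of_graph (c := 3) (d := 2) (x := 0) (g := 1) (by decide)
    (by decide) (by decide) (by decide) A.symm
    fun v hv => by obtain ⟨u, rfl⟩ := hA' v hv; exact ⟨A u, by simp [add_comm]⟩
  have hBZ := hyp.mapsTo_map_of_graph (c := 2) (d := 3) (x := 1) (g := 0) (by decide)
    (by decide) (by decide) (by decide) B hB'
  have hC : MapsTo ((B.trans A.symm) • ·) ((R 2).projIncl ⁻¹' Z 2) ((R 2).projIncl ⁻¹' Z 2) := by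
    intro p hp
    induction p using Projectivization.ind with | h u hu => ?_
    simpa [map_mk, LinearEquiv.smul_def] using hAZ (hBZ hp)
  obtain ⟨⟨p, hp, q, hq, hpq⟩, hfin⟩ :=
    one_lt_ncard_iff_nontrivial_and_finite.mp (by rw [hyp.ncard_preimage_projIncl 2]; norm_num)
  obtain ⟨k, hk, hfix⟩ := hC.exists_pow_smul_eq hfin
  obtain ⟨v₁, v₂, hv, h₁, h₂⟩ :=
    (B.trans A.symm).exists_linearIndependent_eigenvectors_of_pow_smul_eq (hyp.finrank_eq 2) hk
      hpq (hfix p hp) (hfix q hq)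
  exact exists_two_transversals_of_eigenvectors (hyp.skew 2 3 (by decide)) A B hA hB hv h₁ h₂
end

section
/- In configuration B, the only 4-element collinear subsets of the 16 points are the four quadruples Z_a, Z_b, Z_c, Z_d; that is, whenever four distinct points of configuration B lie on a common line of ℙ³, those four points are exactly one of Z_a, Z_b, Z_c, Z_d. In particular there are exactly 4 lines containing 4 of the configuration points. -/
open Projectivization
open scoped LinearAlgebra.Projectivization

/-- Homogeneous coordinates of the 16 points of configuration B (the harmonic
configuration): `vB x i` is the `i`-th point of the quadruple on the `x`-th line. -/
def vB : Fin 4 → Fin 4 → Fin 4 → ℂ :=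
  ![![![1,0,0,0], ![0,0,1,0], ![1,0,1,0], ![1,0,-1,0]],
    ![![0,1,0,0], ![0,0,0,1], ![0,1,0,1], ![0,1,0,-1]],
    ![![1,1,0,0], ![0,0,1,1], ![1,1,1,1], ![1,1,-1,-1]],
    ![![1,0,0,-1], ![0,1,1,0], ![1,1,1,-1], ![-1,1,1,1]]]

lemma vB_ne_zero : ∀ x i, vB x i ≠ 0 := by
  intro x i
  fin_cases x <;> fin_cases i <;> simp [vB, Matrix.cons_eq_zero_iff]

/-- The 16 points of configuration B in `ℙ³`. -/
noncomputable def ptB (x i : Fin 4) : ℙ ℂ (Fin 4 → ℂ) :=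
  Projectivization.mk ℂ (vB x i) (vB_ne_zero x i)

/-- The quadruple `Z_x` of configuration B (`x = 0,1,2,3` for `a,b,c,d`). -/
noncomputable def ZB (x : Fin 4) : Set (ℙ ℂ (Fin 4 → ℂ)) := Set.range (ptB x)

/-- Configuration B as a set of 16 points of `ℙ³`. -/
noncomputable def configB : Set (ℙ ℂ (Fin 4 → ℂ)) := ⋃ x, ZB x


/-!
Two distinct points of a quadruple `Z_x` span its line `L_x`, and no point of another quadruple
satisfies both equations of `L_x`; so a collinear quadruple with two points in one `Z_x` is
`Z_x`. Otherwise it has one point on each of the four lines. The line through its points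
`A ∈ L_a` and `B ∈ L_b` is cut out by two explicit linear forms built from `A` and `B`, and a
direct check shows that these never vanish both at a point of `Z_c` and at a point of `Z_d`.
-/

open Matrix

section

variable {K V : Type*} [DivisionRing K] [AddCommGroup V] [Module K V]

theorem Projectivization.le_of_finrank_eq_two {x y : ℙ K V} (hxy : x ≠ y)
    {U W : Submodule K V} (hU : Module.finrank K U = 2) (hxU : x.submodule ≤ U)
    (hyU : y.submodule ≤ U) (hxW : x.submodule ≤ W) (hyW : y.submodule ≤ W) : U ≤ W := by
  induction x using Projectivization.ind with | h v hv =>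
  induction y using Projectivization.ind with | h w hw =>
  rw [← independent_pair_iff_ne, independent_mk_iff_LinearIndependent] at hxy
  simp only [submodule_mk, Submodule.span_singleton_le_iff_mem] at hxU hyU hxW hyW
  rw [line_unique' hv hw hxy U hU hxU hyU, Submodule.span_le]
  rintro z (rfl | rfl) <;> assumption

end

theorem LinearIndependent.pair_of_mul_sub_mul_ne_zero {R ι : Type*} [CommRing R]
    [NoZeroDivisors R] {u v : ι → R} {p q : ι} (h : u p * v q - u q * v p ≠ 0) :
    LinearIndependent R ![u, v] := by
  refine LinearIndependent.pair_iff.2 fun s t hst => ?_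
  have hp := congrFun hst p
  have hq := congrFun hst q
  simp only [Pi.add_apply, Pi.smul_apply, smul_eq_mul, Pi.zero_apply] at hp hq
  constructor
  · refine (mul_eq_zero.1 (?_ : s * (u p * v q - u q * v p) = 0)).resolve_right h
    linear_combination v q * hp - v p * hq
  · refine (mul_eq_zero.1 (?_ : t * (u p * v q - u q * v p) = 0)).resolve_right h
    linear_combination u p * hq - u q * hp

theorem Matrix.map_intCast_mulVec_eq_zero_iff {R m n : Type*} [Ring R] [CharZero R] [Fintype n]
    (M : Matrix m n ℤ) (w : n → ℤ) :
    (M.map (Int.cast : ℤ → R) *ᵥ fun l => (w l : R)) = 0 ↔ M *ᵥ w = 0 := by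
  have hcast : (M.map (Int.cast : ℤ → R) *ᵥ fun l => (w l : R)) = fun r => ((M *ᵥ w) r : R) :=
    funext fun r => (RingHom.map_mulVec (Int.castRingHom R) M w r).symm
  simp [hcast, funext_iff]

theorem Set.inter_nonempty_of_ncard_eq_nat_card {α ι : Type*} [Finite ι] {Z : ι → Set α}
    {T : Set α} (hT : T ⊆ ⋃ i, Z i) (hcard : T.ncard = Nat.card ι)
    (hZ : ∀ i, (T ∩ Z i).Subsingleton) (i : ι) : (T ∩ Z i).Nonempty := by
  choose f hf using fun p : T => Set.mem_iUnion.1 (hT p.2)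
  have hinj : Function.Injective f := fun p q hpq =>
    Subtype.ext (hZ _ ⟨p.2, hf p⟩ ⟨q.2, hpq ▸ hf q⟩)
  obtain ⟨p, rfl⟩ := (hinj.bijective_of_nat_card_le (by rw [Nat.card_coe_set_eq, hcard])).2 i
  exact ⟨p, p.2, hf p⟩

-- `vB` with integer entries, so that finitely many coordinate identities can be checked by `decide`.
def wB : Fin 4 → Fin 4 → Fin 4 → ℤ :=
  ![![![1,0,0,0], ![0,0,1,0], ![1,0,1,0], ![1,0,-1,0]],
    ![![0,1,0,0], ![0,0,0,1], ![0,1,0,1], ![0,1,0,-1]],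
    ![![1,1,0,0], ![0,0,1,1], ![1,1,1,1], ![1,1,-1,-1]],
    ![![1,0,0,-1], ![0,1,1,0], ![1,1,1,-1], ![-1,1,1,1]]]

theorem vB_eq_intCast (x i : Fin 4) : vB x i = fun l => (wB x i l : ℂ) := by
  funext l; fin_cases x <;> fin_cases i <;> fin_cases l <;> simp [vB, wB]

def lineEqB : Fin 4 → Matrix (Fin 2) (Fin 4) ℤ :=
  ![!![0, 1, 0, 0; 0, 0, 0, 1],
    !![1, 0, 0, 0; 0, 0, 1, 0],
    !![1, -1, 0, 0; 0, 0, 1, -1],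
    !![0, 1, -1, 0; 1, 0, 0, 1]]

-- For `a ∈ L_a` and `b ∈ L_b` both rows vanish at `a` and at `b`.
def transversalEq (a b : Fin 4 → ℤ) : Matrix (Fin 2) (Fin 4) ℤ :=
  !![a 2, 0, -a 0, 0; 0, b 3, 0, -b 1]

theorem wB_zero_one_minor_ne_zero :
    ∀ x, ∃ p q, wB x 0 p * wB x 1 q - wB x 0 q * wB x 1 p ≠ 0 := by decide

theorem wB_two : ∀ x, wB x 2 = wB x 0 + wB x 1 := by decide

theorem wB_three : ∀ x, wB x 3 = wB x 0 - wB x 1 ∨ wB x 3 = wB x 1 - wB x 0 := by decide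

theorem lineEqB_mulVec_wB : ∀ x i, lineEqB x *ᵥ wB x i = 0 := by decide

theorem lineEqB_mulVec_wB_ne_zero : ∀ x z i, z ≠ x → lineEqB x *ᵥ wB z i ≠ 0 := by decide

theorem transversalEq_mulVec_wB_zero : ∀ i j, transversalEq (wB 0 i) (wB 1 j) *ᵥ wB 0 i = 0 := by
  decide

theorem transversalEq_mulVec_wB_one : ∀ i j, transversalEq (wB 0 i) (wB 1 j) *ᵥ wB 1 j = 0 := by
  decide

theorem transversalEq_mulVec_wB_two_or_three_ne_zero : ∀ i j k l,
    transversalEq (wB 0 i) (wB 1 j) *ᵥ wB 2 k ≠ 0 ∨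
      transversalEq (wB 0 i) (wB 1 j) *ᵥ wB 3 l ≠ 0 := by
  decide

def solutionSpace {m : Type*} [Fintype m] (M : Matrix m (Fin 4) ℤ) : Submodule ℂ (Fin 4 → ℂ) :=
  LinearMap.ker (M.map (Int.cast : ℤ → ℂ)).mulVecLin

theorem ptB_submodule_le_solutionSpace_iff {m : Type*} [Fintype m] (M : Matrix m (Fin 4) ℤ)
    (x i : Fin 4) : (ptB x i).submodule ≤ solutionSpace M ↔ M *ᵥ wB x i = 0 := by
  rw [ptB, submodule_mk, Submodule.span_singleton_le_iff_mem, solutionSpace, LinearMap.mem_ker,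
    mulVecLin_apply, vB_eq_intCast, map_intCast_mulVec_eq_zero_iff]

theorem ptB_mem_ZB_iff {x z i : Fin 4} : ptB z i ∈ ZB x ↔ z = x := by
  refine ⟨fun ⟨j, hj⟩ => by_contra fun hzx => lineEqB_mulVec_wB_ne_zero x z i hzx ?_,
    fun h => h ▸ ⟨i, rfl⟩⟩
  rw [← ptB_submodule_le_solutionSpace_iff, ← hj, ptB_submodule_le_solutionSpace_iff]
  exact lineEqB_mulVec_wB x j

theorem ZB_collinear (x : Fin 4) : ∃ U : Submodule ℂ (Fin 4 → ℂ), Module.finrank ℂ U = 2 ∧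
    ∀ i, (ptB x i).submodule ≤ U := by
  obtain ⟨p, q, hpq⟩ := wB_zero_one_minor_ne_zero x
  have hind : LinearIndependent ℂ ![vB x 0, vB x 1] :=
    LinearIndependent.pair_of_mul_sub_mul_ne_zero (p := p) (q := q) (by
      simp only [vB_eq_intCast]; exact_mod_cast hpq)
  refine ⟨Submodule.span ℂ {vB x 0, vB x 1}, ?_, fun i => ?_⟩
  · rw [← Matrix.range_cons_cons_empty _ _ ![], finrank_span_eq_card hind, Fintype.card_fin]
  rw [ptB, submodule_mk, Submodule.span_singleton_le_iff_mem]
  have h0 : vB x 0 ∈ Submodule.span ℂ {vB x 0, vB x 1} := Submodule.subset_span (by simp)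
  have h1 : vB x 1 ∈ Submodule.span ℂ {vB x 0, vB x 1} := Submodule.subset_span (by simp)
  have h2 : vB x 2 = vB x 0 + vB x 1 := by
    simp only [vB_eq_intCast, wB_two x]; funext l; simp
  have h3 : vB x 3 = vB x 0 - vB x 1 ∨ vB x 3 = -(vB x 0 - vB x 1) := by
    simp only [vB_eq_intCast]
    rcases wB_three x with h | h <;> [left; right] <;> funext l <;> simp [h]
  fin_cases i
  · exact h0
  · exact h1
  · simpa [h2] using add_mem h0 h1
  · rcases h3 with h | h <;> simp only [Fin.reduceFinMk, h]
    · exact sub_mem h0 h1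
    · exact neg_mem (sub_mem h0 h1)

theorem subset_ZB_of_nontrivial {U : Submodule ℂ (Fin 4 → ℂ)} (hU : Module.finrank ℂ U = 2)
    {T : Set (ℙ ℂ (Fin 4 → ℂ))} (hTB : T ⊆ configB) (hTU : ∀ p ∈ T, p.submodule ≤ U)
    {x : Fin 4} (hx : (T ∩ ZB x).Nontrivial) : T ⊆ ZB x := by
  obtain ⟨_, ⟨hpT, i, rfl⟩, _, ⟨hqT, j, rfl⟩, hij⟩ := hx
  have hUL : U ≤ solutionSpace (lineEqB x) :=
    Projectivization.le_of_finrank_eq_two hij hU (hTU _ hpT) (hTU _ hqT)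
      ((ptB_submodule_le_solutionSpace_iff _ _ _).2 (lineEqB_mulVec_wB x i))
      ((ptB_submodule_le_solutionSpace_iff _ _ _).2 (lineEqB_mulVec_wB x j))
  intro r hr
  obtain ⟨z, k, rfl⟩ := Set.mem_iUnion.1 (hTB hr)
  refine ptB_mem_ZB_iff.2 (by_contra fun hzx => lineEqB_mulVec_wB_ne_zero x z k hzx ?_)
  exact (ptB_submodule_le_solutionSpace_iff _ _ _).1 ((hTU _ hr).trans hUL)

theorem no_line_meets_every_ZB : ¬∃ U : Submodule ℂ (Fin 4 → ℂ), Module.finrank ℂ U = 2 ∧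
    ∀ x, ∃ i, (ptB x i).submodule ≤ U := by
  rintro ⟨U, hU, hmeet⟩
  obtain ⟨i, hi⟩ := hmeet 0
  obtain ⟨j, hj⟩ := hmeet 1
  obtain ⟨k, hk⟩ := hmeet 2
  obtain ⟨l, hl⟩ := hmeet 3
  have hij : ptB 0 i ≠ ptB 1 j := fun h => by
    simpa using ptB_mem_ZB_iff.1 (h ▸ ⟨i, rfl⟩ : ptB 1 j ∈ ZB 0)
  have hUL : U ≤ solutionSpace (transversalEq (wB 0 i) (wB 1 j)) :=
    Projectivization.le_of_finrank_eq_two hij hU hi hj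
      ((ptB_submodule_le_solutionSpace_iff _ _ _).2 (transversalEq_mulVec_wB_zero i j))
      ((ptB_submodule_le_solutionSpace_iff _ _ _).2 (transversalEq_mulVec_wB_one i j))
  rcases transversalEq_mulVec_wB_two_or_three_ne_zero i j k l with h | h
  · exact h ((ptB_submodule_le_solutionSpace_iff _ _ _).1 (hk.trans hUL))
  · exact h ((ptB_submodule_le_solutionSpace_iff _ _ _).1 (hl.trans hUL))

/-- Each quadruple `Z_x` of configuration B is collinear (lies on a line
of `ℙ³`), and the only 4-element collinear subsets of the 16 points of configuration B are
the four quadruples `Z_a, Z_b, Z_c, Z_d`: whenever four distinct points of configuration B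
lie on a common line, they form one of the quadruples.  In particular exactly 4 lines
contain 4 of the configuration points. -/
theorem configB_collinear_quadruples :
    (∀ x, ∃ U : Submodule ℂ (Fin 4 → ℂ), Module.finrank ℂ U = 2 ∧
      ∀ i, Projectivization.submodule (ptB x i) ≤ U) ∧
    ∀ T : Set (ℙ ℂ (Fin 4 → ℂ)), T ⊆ configB → T.ncard = 4 →
      (∃ U : Submodule ℂ (Fin 4 → ℂ), Module.finrank ℂ U = 2 ∧
        ∀ p ∈ T, Projectivization.submodule p ≤ U) →
      ∃ x, T = ZB x := by
  refine ⟨ZB_collinear, fun T hTB hcard ⟨U, hU, hTU⟩ => ?_⟩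
  by_cases hsub : ∀ x, (T ∩ ZB x).Subsingleton
  · refine absurd ⟨U, hU, fun x => ?_⟩ no_line_meets_every_ZB
    obtain ⟨_, hpT, i, rfl⟩ :=
      Set.inter_nonempty_of_ncard_eq_nat_card hTB (by simp [hcard]) hsub x
    exact ⟨i, hTU _ hpT⟩
  · simp only [not_forall, Set.not_subsingleton_iff] at hsub
    obtain ⟨x, hx⟩ := hsub
    refine ⟨x, Set.eq_of_subset_of_ncard_le (subset_ZB_of_nontrivial hU hTB hTU hx) ?_
      (Set.finite_range _)⟩
    simpa [hcard, ZB, Set.image_univ] using Set.ncard_image_le (f := ptB x) (s := Set.univ)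
end

section
/- No nonzero homogeneous quadratic form on ℂ⁴ vanishes at all 16 points of configuration B; that is, configuration B is not contained in any quadric surface of ℙ³ (in particular it is not a grid). -/
open Projectivization
open scoped LinearAlgebra.Projectivization

lemma qexpand (q : QuadraticForm ℂ (Fin 4 → ℂ)) (w : Fin 4 → ℂ) :
    q w = ∑ i : Fin 4, ∑ j : Fin 4, w i * w j *
      QuadraticMap.associatedHom ℂ q (Pi.single i 1) (Pi.single j 1) := by
  have hw : (∑ i : Fin 4, w i • (Pi.single i (1:ℂ) : Fin 4 → ℂ)) = w := by
    have h1 : ∀ i : Fin 4, w i • (Pi.single i (1:ℂ) : Fin 4 → ℂ) = Pi.single i (w i) := by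
      intro i; ext j; by_cases h : j = i <;> simp [Pi.single_apply, h]
    simp_rw [h1, Finset.univ_sum_single]
  have h2 : q w = QuadraticMap.associatedHom ℂ q (∑ i : Fin 4, w i • (Pi.single i (1:ℂ) : Fin 4 → ℂ))
      (∑ i : Fin 4, w i • (Pi.single i (1:ℂ) : Fin 4 → ℂ)) := by
    rw [hw, QuadraticMap.associated_eq_self_apply]
  rw [h2]
  simp only [LinearMap.map_sum₂, map_sum, LinearMap.map_smul₂, LinearMap.map_smul,
    LinearMap.smul_apply, LinearMap.sum_apply, smul_eq_mul]
  rw [Finset.sum_comm]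
  exact Finset.sum_congr rfl fun i _ => Finset.sum_congr rfl fun j _ => by ring

/-- No nonzero homogeneous quadratic form on `ℂ⁴` vanishes at all 16
points of configuration B; that is, configuration B is not contained in any quadric
surface of `ℙ³` (in particular it is not a grid). -/
theorem configB_not_on_quadric :
    ¬ ∃ q : QuadraticForm ℂ (Fin 4 → ℂ), q ≠ 0 ∧
      ∀ p ∈ configB, ∀ v ∈ Projectivization.submodule p, q v = 0 := by
  rintro ⟨q, hq, hvan⟩
  apply hq
  have hpt : ∀ x i : Fin 4, q (vB x i) = 0 := by
    intro x i
    refine hvan (ptB x i) (Set.mem_iUnion.2 ⟨x, Set.mem_range_self i⟩) (vB x i) ?_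
    rw [ptB, Projectivization.submodule_mk]
    exact Submodule.mem_span_singleton_self _
  set b : Fin 4 → Fin 4 → ℂ :=
    fun i j => QuadraticMap.associatedHom ℂ q (Pi.single i 1) (Pi.single j 1) with hb
  have E : ∀ x i : Fin 4, ∑ a : Fin 4, ∑ c : Fin 4, vB x i a * vB x i c * b a c = 0 :=
    fun x i => ((qexpand q (vB x i)).symm.trans (hpt x i))
  have h00 := E 0 0; have h01 := E 0 1; have h02 := E 0 2
  have h10 := E 1 0; have h11 := E 1 1; have h12 := E 1 2
  have h20 := E 2 0; have h21 := E 2 1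
  have h30 := E 3 0; have h31 := E 3 1
  simp only [vB, Fin.sum_univ_four, Matrix.cons_val_zero, Matrix.cons_val_one,
    Matrix.head_cons, Matrix.cons_val_two, Matrix.tail_cons, Matrix.cons_val_three,
    Matrix.head_fin_const, one_mul, mul_one, zero_mul, mul_zero, add_zero, zero_add,
    neg_mul, mul_neg, neg_neg, one_mul] at h00 h01 h02 h10 h11 h12 h20 h21 h30 h31
  ext w
  rw [qexpand q w]
  show _ = (0 : QuadraticForm ℂ (Fin 4 → ℂ)) w
  simp only [QuadraticMap.zero_apply, Fin.sum_univ_four]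
  linear_combination (w 0 * w 0) * h00 + (w 2 * w 2) * h01 + (w 1 * w 1) * h10 +
    (w 3 * w 3) * h11 + (w 0 * w 2) * (h02 - h00 - h01) + (w 1 * w 3) * (h12 - h10 - h11) +
    (w 0 * w 1) * (h20 - h00 - h10) + (w 2 * w 3) * (h21 - h01 - h11) +
    (w 0 * w 3) * (h00 + h11 - h30) + (w 1 * w 2) * (h31 - h10 - h01)
end

section
/- Assume the half-grid hypotheses for a 16-point set Z = Z_a ∪ Z_b ∪ Z_c ∪ Z_d on four pairwise skew lines R_a, R_b, R_c, R_d in ℙ³. Then Z is not a (4,4)-grid: there do not exist four pairwise skew lines m₁, m₂, m₃, m₄ such that each mᵢ meets each of R_a, R_b, R_c, R_d in a point of Z and the 16 intersection points mᵢ ∩ R_x are exactly the points of Z. -/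
open Projectivization
open scoped LinearAlgebra.Projectivization

/-!
Three pairwise skew lines of `ℙ³` lie on a quadric: if `π₀` and `π₁` project `ℂ⁴` onto the third
line along the second and along the first, and `ω` is a nonzero alternating form on the third
line, then `v ↦ ω (π₀ v) (π₁ v)` vanishes on all three lines. A line meeting three pairwise skew
lines of a quadric lies on it. So if `Z` were a (4,4)-grid, every `m i` would lie on the quadric
through `R 0, R 1, R 2`, and with them all of `Z`, which no quadric contains.
-/

open Module Submodule

lemma LinearMap.BilinForm.exists_isAlt_ne_zero {K W : Type*} [Field K] [AddCommGroup W]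
    [Module K W] (hW : 2 ≤ finrank K W) : ∃ B : LinearMap.BilinForm K W, B.IsAlt ∧ B ≠ 0 := by
  have : FiniteDimensional K W := Module.finite_of_finrank_pos (by omega)
  let b := finBasis K W
  let i : Fin (finrank K W) := ⟨0, by omega⟩
  let j : Fin (finrank K W) := ⟨1, by omega⟩
  let C : LinearMap.BilinForm K W := (b.coord i).smulRight (b.coord j)
  refine ⟨C - C.flip, fun u ↦ sub_self (C u u), fun h ↦ ?_⟩
  have hij := LinearMap.congr_fun₂ h (b i) (b j)
  simp [C, i, j] at hij

lemma exists_quadraticForm_ne_zero_vanishing_of_isCompl {K V : Type*} [CommRing K]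
    [AddCommGroup V] [Module K V] {W₀ W₁ W₂ : Submodule K V}
    (h01 : Codisjoint W₀ W₁) (h20 : IsCompl W₂ W₀) (h21 : IsCompl W₂ W₁)
    {B : LinearMap.BilinForm K W₂} (hB : B.IsAlt) (hB0 : B ≠ 0) :
    ∃ q : QuadraticForm K V, q ≠ 0 ∧
      (∀ v ∈ W₀, q v = 0) ∧ (∀ v ∈ W₁, q v = 0) ∧ (∀ v ∈ W₂, q v = 0) := by
  set π₀ := W₂.projectionOnto W₁ h21
  set π₁ := W₂.projectionOnto W₀ h20
  set q := LinearMap.BilinMap.toQuadraticMap (B.compl₁₂ π₀ π₁)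
  have hq : ∀ v, q v = B (π₀ v) (π₁ v) := fun _ ↦ rfl
  refine ⟨q, fun h ↦ ?_, fun v hv ↦ ?_, fun v hv ↦ ?_, fun v hv ↦ ?_⟩
  · obtain ⟨u, w, huw⟩ : ∃ u w, B u w ≠ 0 := by
      by_contra! h
      exact hB0 (LinearMap.ext₂ h)
    have hsup : ∀ x : V, x ∈ W₀ ⊔ W₁ := fun x ↦ h01.eq_top ▸ mem_top
    obtain ⟨a₀, ha₀, a₁, ha₁, hu⟩ := mem_sup.mp (hsup u)
    obtain ⟨b₀, hb₀, b₁, hb₁, hw⟩ := mem_sup.mp (hsup w)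
    have hπ₀ : π₀ (a₀ + b₁) = u := by
      rw [map_add, projectionOnto_apply_of_mem_right h21 hb₁, add_zero, eq_sub_of_add_eq hu,
        map_sub, projectionOnto_apply_right h21 ⟨a₁, ha₁⟩, sub_zero, projectionOnto_apply_left]
    have hπ₁ : π₁ (a₀ + b₁) = w := by
      rw [map_add, projectionOnto_apply_of_mem_right h20 ha₀, zero_add, eq_sub_of_add_eq' hw,
        map_sub, projectionOnto_apply_right h20 ⟨b₀, hb₀⟩, sub_zero, projectionOnto_apply_left]
    exact huw (by rw [← hπ₀, ← hπ₁, ← hq, h, zero_apply])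
  · rw [hq, projectionOnto_apply_of_mem_right h20 hv, map_zero]
  · rw [hq, projectionOnto_apply_of_mem_right h21 hv, LinearMap.map_zero₂]
  · rw [hq, projectionOnto_apply_of_mem_left h21 hv, projectionOnto_apply_of_mem_left h20 hv]
    exact hB _

lemma QuadraticMap.eq_zero_of_mem_span_pair {R M : Type*} [CommRing R] [NoZeroDivisors R]
    [AddCommGroup M] [Module R M] (Q : QuadraticMap R M R) {x y z : M} {a b : R}
    (ha : a ≠ 0) (hb : b ≠ 0) (hx : Q x = 0) (hy : Q y = 0) (hxy : Q (a • x + b • y) = 0)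
    (hz : z ∈ span R {x, y}) : Q z = 0 := by
  have expand : ∀ c d : R, Q (c • x + d • y) = c * d * polar Q x y := by
    intro c d
    have h : polar Q (c • x) (d • y) = Q (c • x + d • y) - Q (c • x) - Q (d • y) := rfl
    rw [polar_smul_left, polar_smul_right, Q.map_smul, Q.map_smul, hx, hy] at h
    simp only [smul_eq_mul, mul_zero, sub_zero] at h
    rw [← h]
    ring
  have hpolar : polar Q x y = 0 := by simpa [ha, hb, hxy] using expand a b
  obtain ⟨c, d, rfl⟩ := mem_span_pair.mp hz
  rw [expand, hpolar, mul_zero]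

-- Two of the three meeting points already span `M`; the third is then a combination of them
-- with both coefficients nonzero.
lemma QuadraticMap.eq_zero_on_of_meets_three_disjoint {K V : Type*} [Field K] [AddCommGroup V]
    [Module K V] (Q : QuadraticMap K V K) {M R₀ R₁ R₂ : Submodule K V} (hM : finrank K M = 2)
    (h01 : Disjoint R₀ R₁) (h02 : Disjoint R₀ R₂) (h12 : Disjoint R₁ R₂)
    (hM₀ : M ⊓ R₀ ≠ ⊥) (hM₁ : M ⊓ R₁ ≠ ⊥) (hM₂ : M ⊓ R₂ ≠ ⊥)
    (hQ₀ : ∀ v ∈ R₀, Q v = 0) (hQ₁ : ∀ v ∈ R₁, Q v = 0) (hQ₂ : ∀ v ∈ R₂, Q v = 0) :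
    ∀ v ∈ M, Q v = 0 := by
  have : FiniteDimensional K M := Module.finite_of_finrank_pos (by omega)
  obtain ⟨v₀, ⟨hv₀M, hv₀R⟩, hv₀⟩ := (Submodule.ne_bot_iff _).mp hM₀
  obtain ⟨v₁, ⟨hv₁M, hv₁R⟩, hv₁⟩ := (Submodule.ne_bot_iff _).mp hM₁
  obtain ⟨v₂, ⟨hv₂M, hv₂R⟩, hv₂⟩ := (Submodule.ne_bot_iff _).mp hM₂
  have hspan : span K {v₀, v₁} = M := by
    refine eq_of_le_of_finrank_le (span_le.mpr (by simp [Set.insert_subset_iff, hv₀M, hv₁M])) ?_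
    have hdisj : Disjoint (K ∙ v₀) (K ∙ v₁) :=
      h01.mono ((span_singleton_le_iff_mem _ _).mpr hv₀R) ((span_singleton_le_iff_mem _ _).mpr hv₁R)
    have := finrank_sup_add_finrank_inf_eq (K ∙ v₀) (K ∙ v₁)
    rw [hdisj.eq_bot, finrank_bot, finrank_span_singleton hv₀, finrank_span_singleton hv₁] at this
    rw [hM, span_insert]
    omega
  obtain ⟨a, b, hab⟩ := mem_span_pair.mp (hspan ▸ hv₂M)
  have ha : a ≠ 0 := by
    rintro rfl
    rw [zero_smul, zero_add] at hab
    exact hv₂ (disjoint_def.mp h12 v₂ (hab ▸ smul_mem _ b hv₁R) hv₂R)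
  have hb : b ≠ 0 := by
    rintro rfl
    rw [zero_smul, add_zero] at hab
    exact hv₂ (disjoint_def.mp h02 v₂ (hab ▸ smul_mem _ a hv₀R) hv₂R)
  intro v hv
  exact Q.eq_zero_of_mem_span_pair ha hb (hQ₀ v₀ hv₀R) (hQ₁ v₁ hv₁R) (hab ▸ hQ₂ v₂ hv₂R)
    (hspan ▸ hv)

/-- Under the half-grid hypotheses for a 16-point set
`Z = Z 0 ∪ Z 1 ∪ Z 2 ∪ Z 3` on four pairwise skew lines `R 0, …, R 3`, the set `Z` is not
a (4,4)-grid: there are no four pairwise skew lines `m 0, …, m 3` such that each `m i`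
meets each `R x` in a point of `Z` and the 16 intersection points `m i ∩ R x` are exactly
the points of `Z`. -/
theorem halfGrid_not_a_grid
    (R : Fin 4 → Submodule ℂ (Fin 4 → ℂ)) (Z : Fin 4 → Set (ℙ ℂ (Fin 4 → ℂ)))
    (hyp : HalfGridHyp R Z) :
    ¬ ∃ m : Fin 4 → Submodule ℂ (Fin 4 → ℂ),
        (∀ i, Module.finrank ℂ (m i) = 2) ∧
        (∀ i j, i ≠ j → m i ⊓ m j = ⊥) ∧
        (∀ i x, ∃ p : ℙ ℂ (Fin 4 → ℂ), p ∈ (⋃ y, Z y) ∧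
          Projectivization.submodule p ≤ m i ∧ Projectivization.submodule p ≤ R x) ∧
        {p : ℙ ℂ (Fin 4 → ℂ) | ∃ i x,
            Projectivization.submodule p ≤ m i ∧ Projectivization.submodule p ≤ R x}
          = ⋃ y, Z y := by
  rintro ⟨m, hrank, -, hmeet, hZ⟩
  have hskew : ∀ x y, x ≠ y → Disjoint (R x) (R y) := fun x y h ↦ disjoint_iff.mpr (hyp.skew x y h)
  have hcompl : ∀ x y, x ≠ y → IsCompl (R x) (R y) := fun x y h ↦
    (isCompl_iff_disjoint _ _ (by simp [hyp.finrank_eq])).mpr (hskew x y h)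
  obtain ⟨B, hB, hB0⟩ := LinearMap.BilinForm.exists_isAlt_ne_zero (hyp.finrank_eq 2).ge
  obtain ⟨q, hq0, hR₀, hR₁, hR₂⟩ := exists_quadraticForm_ne_zero_vanishing_of_isCompl
    (hcompl 0 1 (by decide)).codisjoint (hcompl 2 0 (by decide)) (hcompl 2 1 (by decide)) hB hB0
  have hmeets : ∀ i x, m i ⊓ R x ≠ ⊥ := fun i x ↦ by
    obtain ⟨p, -, hpm, hpR⟩ := hmeet i x
    refine ne_bot_of_le_ne_bot ?_ (le_inf hpm hpR)
    rw [p.submodule_eq, Ne, span_singleton_eq_bot]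
    exact p.rep_nonzero
  have hm : ∀ i, ∀ v ∈ m i, q v = 0 := fun i ↦
    q.eq_zero_on_of_meets_three_disjoint (hrank i) (hskew 0 1 (by decide)) (hskew 0 2 (by decide))
      (hskew 1 2 (by decide)) (hmeets i 0) (hmeets i 1) (hmeets i 2) hR₀ hR₁ hR₂
  refine hyp.no_quadric ⟨q, hq0, fun x p hp v hv ↦ ?_⟩
  obtain ⟨i, -, hpm, -⟩ :
      p ∈ {p : ℙ ℂ (Fin 4 → ℂ) | ∃ i x, p.submodule ≤ m i ∧ p.submodule ≤ R x} :=
    hZ ▸ Set.mem_iUnion_of_mem x hp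
  exact hm i v (hpm hv)
end
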